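/- arXiv:1611.09981 — 5 statements merged into one kernel-verified Lean document; each statement's English description precedes it below -/
import Mathlib

section
/- Let π ∈ Δ^{d−1} with π_1 ≥ π_2 ≥ … ≥ π_d > 0, and fix 1 ≤ k ≤ d−1. Among all ways to partition {1,…,d} into k nonempty groups and form the induced probability vector of group masses, the Shannon entropy of the group-mass vector is minimized by the partition grouping the d−k+1 largest entries π_1,…,π_{d−k+1} together and leaving each of π_{d−k+2},…,π_d as singletons. That is, min over X ∈ D_k of H(Xπ) equals H(π^{(k)}) where π^{(k)} = (π_1+…+π_{d−k+1}, π_{d−k+2}, …, π_d). -/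
open Finset

lemma abel_nonneg (n : ℕ) (x dd : ℕ → ℝ)
    (hpsum : ∀ m ≤ n, 0 ≤ ∑ i ∈ range m, x i)
    (htot : ∑ i ∈ range n, x i = 0)
    (hmono : ∀ i, i + 1 < n → dd (i + 1) ≤ dd i) :
    0 ≤ ∑ i ∈ range n, x i * dd i := by
  have h := Finset.sum_range_by_parts dd x n
  simp only [smul_eq_mul] at h
  have h2 : ∑ i ∈ range n, x i * dd i = ∑ i ∈ range n, dd i * x i := by
    apply Finset.sum_congr rfl; intros; ring
  rw [h2, h, htot, mul_zero, zero_sub, neg_nonneg]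
  apply Finset.sum_nonpos
  intro i hi
  rw [mem_range] at hi
  have h1 : dd (i + 1) - dd i ≤ 0 := by
    have := hmono i (by omega); linarith
  have h3 : 0 ≤ ∑ j ∈ range (i + 1), x j := hpsum (i + 1) (by omega)
  exact mul_nonpos_of_nonpos_of_nonneg h1 h3

lemma tangent_negMulLog (x y : ℝ) (hx : 0 < x) (hy : 0 ≤ y) :
    -(y * Real.log y) ≤ -(x * Real.log x) - (Real.log x + 1) * (y - x) := by
  rcases hy.eq_or_lt with h | hy'
  · rw [← h]
    simp
    nlinarith [hx]
  · have hlog := Real.log_le_sub_one_of_pos (div_pos hx hy')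
    rw [Real.log_div hx.ne' hy'.ne'] at hlog
    have h1 : y * (Real.log x - Real.log y) ≤ y * (x / y - 1) :=
      mul_le_mul_of_nonneg_left hlog hy
    have hxy : y * (x / y - 1) = x - y := by field_simp
    nlinarith [h1]

lemma entropy_maj (k : ℕ) (a b : ℕ → ℝ)
    (ha_pos : ∀ i < k, 0 < a i)
    (hb : ∀ i < k, 0 ≤ b i)
    (ha_anti : ∀ i j, i ≤ j → j < k → a j ≤ a i)
    (hmaj : ∀ m ≤ k, ∑ i ∈ range m, a i ≤ ∑ i ∈ range m, b i)
    (htot : ∑ i ∈ range k, a i = ∑ i ∈ range k, b i) :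
    ∑ i ∈ range k, -(b i * Real.log (b i)) ≤ ∑ i ∈ range k, -(a i * Real.log (a i)) := by
  rw [← sub_nonneg, ← Finset.sum_sub_distrib]
  have key : ∀ i ∈ range k,
      (b i - a i) * Real.log (a i) + (b i - a i) ≤
        -(a i * Real.log (a i)) - -(b i * Real.log (b i)) := by
    intro i hi
    rw [mem_range] at hi
    have := tangent_negMulLog (a i) (b i) (ha_pos i hi) (hb i hi)
    nlinarith [this]
  calc (0:ℝ) ≤ ∑ i ∈ range k, (b i - a i) * Real.log (a i) + ∑ i ∈ range k, (b i - a i) := by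
        have hz : ∑ i ∈ range k, (b i - a i) = 0 := by
          rw [Finset.sum_sub_distrib, htot]; ring
        have h0 : 0 ≤ ∑ i ∈ range k, (b i - a i) * Real.log (a i) := by
          apply abel_nonneg k _ _ ?_ ?_ ?_
          · intro m hm
            have := hmaj m hm
            rw [Finset.sum_sub_distrib]; linarith
          · rw [Finset.sum_sub_distrib, htot]; ring
          · intro i hi
            exact Real.log_le_log (ha_pos (i+1) hi) (ha_anti i (i+1) (by omega) hi)
        rw [hz]; linarith
    _ ≤ ∑ i ∈ range k, (-(a i * Real.log (a i)) - -(b i * Real.log (b i))) := by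
        rw [← Finset.sum_add_distrib]
        exact Finset.sum_le_sum key

lemma image_val_filter (n : ℕ) (p : ℕ → Prop) [DecidablePred p] :
    ((univ.filter (fun i : Fin n => p ↑i)).image Fin.val) = (range n).filter p := by
  ext t
  simp only [mem_image, mem_filter, mem_univ, true_and, mem_range]
  constructor
  · rintro ⟨i, hp, rfl⟩; exact ⟨i.isLt, hp⟩
  · rintro ⟨ht, hp⟩; exact ⟨⟨t, ht⟩, hp, rfl⟩

lemma sum_filter_val (n : ℕ) (p : ℕ → Prop) [DecidablePred p] (f : ℕ → ℝ) :
    ∑ i ∈ univ.filter (fun i : Fin n => p ↑i), f ↑i = ∑ t ∈ (range n).filter p, f t := by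
  rw [← image_val_filter, Finset.sum_image (fun a _ b _ h => Fin.val_injective h)]

lemma card_filter_ge_eq (n m : ℕ) :
    (univ.filter (fun i : Fin n => m ≤ ↑i)).card = n - m := by
  rw [← Finset.card_image_of_injective _ Fin.val_injective, image_val_filter]
  have : (range n).filter (fun t => m ≤ t) = Ico m n := by
    ext t; simp only [mem_filter, mem_range, mem_Ico]; omega
  rw [this, Nat.card_Ico]

lemma smallest_sum_le (d : ℕ) (π : Fin d → ℝ) (hpos : ∀ r, 0 ≤ π r)
    (hsorted : ∀ r s : Fin d, r ≤ s → π s ≤ π r) (U : Finset (Fin d)) (j : ℕ)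
    (hjU : j ≤ U.card) :
    ∑ r ∈ univ.filter (fun r : Fin d => d - j ≤ ↑r), π r ≤ ∑ r ∈ U, π r := by
  rcases Nat.eq_zero_or_pos j with rfl | hj
  · have : (univ.filter (fun r : Fin d => d - 0 ≤ ↑r)) = ∅ := by
      ext r; simp only [mem_filter, mem_univ, true_and, Finset.notMem_empty, iff_false]
      have := r.isLt; omega
    rw [this, Finset.sum_empty]
    exact Finset.sum_nonneg fun r _ => hpos r
  · set V := univ.filter (fun r : Fin d => d - j ≤ ↑r) with hV
    have hjd : j ≤ d := le_trans hjU (le_trans (Finset.card_le_univ U) (by simp))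
    have hVcard : V.card = j := by rw [hV, card_filter_ge_eq]; omega
    have hdj : d - j < d := by omega
    set M := π ⟨d - j, hdj⟩ with hM
    have h1 : ∑ r ∈ V \ U, π r ≤ (V \ U).card • M := by
      apply Finset.sum_le_card_nsmul
      intro r hr
      have hrV : r ∈ V := (Finset.mem_sdiff.mp hr).1
      rw [hV, mem_filter] at hrV
      exact hsorted ⟨d - j, hdj⟩ r (by simp [Fin.le_def]; omega)
    have h2 : (U \ V).card • M ≤ ∑ r ∈ U \ V, π r := by
      apply Finset.card_nsmul_le_sum
      intro r hr
      have hrV : r ∈ U ∧ r ∉ V := Finset.mem_sdiff.mp hr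
      have : (r : ℕ) < d - j := by
        by_contra h
        exact hrV.2 (by rw [hV, mem_filter]; exact ⟨mem_univ r, by omega⟩)
      exact hsorted r ⟨d - j, hdj⟩ (by simp [Fin.le_def]; omega)
    have hcard : (V \ U).card ≤ (U \ V).card := by
      have hU : (U \ V).card + (U ∩ V).card = U.card := Finset.card_sdiff_add_card_inter U V
      have hVc : (V \ U).card + (V ∩ U).card = V.card := Finset.card_sdiff_add_card_inter V U
      have : (U ∩ V).card = (V ∩ U).card := by rw [Finset.inter_comm]
      omega
    have hM0 : 0 ≤ M := hpos _
    have h3 : ((V \ U).card : ℝ) * M ≤ ((U \ V).card : ℝ) * M := by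
      apply mul_le_mul_of_nonneg_right _ hM0
      exact_mod_cast hcard
    have hsplit : ∀ (A B : Finset (Fin d)), ∑ r ∈ A, π r = ∑ r ∈ A ∩ B, π r + ∑ r ∈ A \ B, π r := by
      intro A B; rw [Finset.sum_inter_add_sum_sdiff]
    rw [hsplit V U, hsplit U V, Finset.inter_comm]
    simp only [nsmul_eq_mul] at h1 h2
    linarith

/-- Let `π ∈ Δ^{d−1}` with `π_1 ≥ … ≥ π_d > 0` and `1 ≤ k ≤ d−1`.  Over all partitions of
`{1,…,d}` into `k` nonempty groups (encoded as surjections `c : Fin d → Fin k`), the Shannon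
entropy of the vector of group masses is minimized at value `H(π^{(k)})`, where
`π^{(k)} = (π_1 + … + π_{d−k+1}, π_{d−k+2}, …, π_d)`. -/
theorem entropy_partition_min (d k : ℕ) (hk1 : 1 ≤ k) (hk : k ≤ d - 1)
    (π : Fin d → ℝ) (hpos : ∀ r, 0 < π r) (hsum : ∑ r, π r = 1)
    (hsorted : ∀ r s : Fin d, r ≤ s → π s ≤ π r) :
    IsLeast
      { h : ℝ | ∃ c : Fin d → Fin k, Function.Surjective c ∧
          h = -(∑ l : Fin k,
            (∑ r ∈ Finset.univ.filter (fun r => c r = l), π r) *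
              Real.log (∑ r ∈ Finset.univ.filter (fun r => c r = l), π r)) }
      (-(∑ l : Fin k,
          (if (l : ℕ) = 0 then
              ∑ r ∈ Finset.univ.filter (fun r : Fin d => (r : ℕ) < d - k + 1), π r
            else π ⟨d - k + (l : ℕ), by have := l.isLt; omega⟩) *
          Real.log
            (if (l : ℕ) = 0 then
                ∑ r ∈ Finset.univ.filter (fun r : Fin d => (r : ℕ) < d - k + 1), π r
              else π ⟨d - k + (l : ℕ), by have := l.isLt; omega⟩))) := by
  have hd : 2 ≤ d := by omega
  have hdk1 : d - k + 1 ≤ d := by omega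
  set S : ℝ := ∑ r ∈ Finset.univ.filter (fun r : Fin d => (r : ℕ) < d - k + 1), π r with hS
  set πe : ℕ → ℝ := fun i => if h : i < d then π ⟨i, h⟩ else 0 with hπe
  have hπe_val : ∀ r : Fin d, πe ↑r = π r := by
    intro r; rw [hπe]; simp only [r.isLt, dif_pos]
  set bN : ℕ → ℝ := fun i => if i = 0 then S else πe (d - k + i) with hbN
  -- the target if-expression equals bN ∘ val
  have hBb : ∀ l : Fin k,
      (if (l : ℕ) = 0 then S else π ⟨d - k + (l : ℕ), by have := l.isLt; omega⟩) = bN ↑l := by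
    intro l
    by_cases hl : (l : ℕ) = 0
    · simp [hbN, hl]
    · simp only [hbN, hπe, if_neg hl]
      have hlt : d - k + (l : ℕ) < d := by have := l.isLt; omega
      rw [dif_pos hlt]
  -- S as a range sum
  have hS_range : S = ∑ t ∈ range (d - k + 1), πe t := by
    rw [hS]
    have h1 : ∑ r ∈ Finset.univ.filter (fun r : Fin d => (r : ℕ) < d - k + 1), π r
        = ∑ r ∈ Finset.univ.filter (fun r : Fin d => (r : ℕ) < d - k + 1), πe ↑r :=
      Finset.sum_congr rfl fun r _ => (hπe_val r).symm
    rw [h1, sum_filter_val d (fun t => t < d - k + 1) πe]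
    congr 1
    ext t; simp only [mem_filter, mem_range]; omega
  -- total of π over range d
  have hπe_tot : ∑ t ∈ range d, πe t = 1 := by
    rw [← Fin.sum_univ_eq_sum_range]
    rw [← hsum]
    exact Finset.sum_congr rfl fun r _ => hπe_val r
  -- tails of bN
  have tail_b : ∀ m, 1 ≤ m → m ≤ k →
      ∑ i ∈ Ico m k, bN i = ∑ t ∈ Ico (d - k + m) d, πe t := by
    intro m hm1 hmk
    have h1 : ∑ i ∈ Ico m k, bN i = ∑ i ∈ Ico m k, πe (d - k + i) := by
      apply Finset.sum_congr rfl
      intro i hi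
      rw [mem_Ico] at hi
      simp only [hbN]
      rw [if_neg (by omega)]
    rw [h1, Finset.sum_Ico_eq_sum_range, Finset.sum_Ico_eq_sum_range]
    have hcnt : d - (d - k + m) = k - m := by omega
    rw [hcnt]
    apply Finset.sum_congr rfl
    intro j _
    congr 1
    omega
  -- total of bN
  have htotb : ∑ i ∈ range k, bN i = 1 := by
    have hsplit : ∑ i ∈ range 1, bN i + ∑ i ∈ Ico 1 k, bN i = ∑ i ∈ range k, bN i :=
      Finset.sum_range_add_sum_Ico bN hk1
    rw [← hsplit, Finset.sum_range_one, tail_b 1 le_rfl hk1]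
    have hb0 : bN 0 = S := by simp [hbN]
    rw [hb0, hS_range]
    rw [← hπe_tot]
    exact Finset.sum_range_add_sum_Ico πe hdk1
  have hπe_nonneg : ∀ t, 0 ≤ πe t := by
    intro t
    simp only [hπe]
    split_ifs with h
    · exact (hpos _).le
    · exact le_rfl
  have hbnonneg : ∀ i < k, 0 ≤ bN i := by
    intro i _
    simp only [hbN]
    split_ifs with hi
    · rw [hS_range]
      exact Finset.sum_nonneg fun t _ => hπe_nonneg t
    · exact hπe_nonneg _
  constructor
  · -- membership
    set c0 : Fin d → Fin k := fun r =>
      if (r : ℕ) < d - k + 1 then ⟨0, hk1⟩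
      else ⟨(r : ℕ) - (d - k), by have := r.isLt; omega⟩ with hc0
    refine ⟨c0, ?_, ?_⟩
    · intro l
      by_cases hl : (l : ℕ) = 0
      · refine ⟨⟨0, by omega⟩, ?_⟩
        simp only [hc0]
        rw [if_pos (show ((⟨0, by omega⟩ : Fin d) : ℕ) < d - k + 1 by simp)]
        exact Fin.ext (by simp [hl])
      · refine ⟨⟨d - k + (l : ℕ), by have := l.isLt; omega⟩, ?_⟩
        simp only [hc0]
        rw [if_neg (by simp; omega)]
        exact Fin.ext (by simp)
    · congr 1
      apply Finset.sum_congr rfl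
      intro l _
      have hfiber : ∑ r ∈ Finset.univ.filter (fun r => c0 r = l), π r
          = (if (l : ℕ) = 0 then S
             else π ⟨d - k + (l : ℕ), by have := l.isLt; omega⟩) := by
        by_cases hl : (l : ℕ) = 0
        · rw [if_pos hl, hS]
          apply Finset.sum_congr _ (fun _ _ => rfl)
          apply Finset.filter_congr
          intro r _
          simp only [hc0]
          constructor
          · intro h
            by_contra hcon
            rw [if_neg hcon] at h
            have := congrArg Fin.val h
            simp only at this
            have hr := r.isLt
            omega
          · intro h
            rw [if_pos h]
            exact Fin.ext (by simp [hl])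
        · rw [if_neg hl]
          have hsingle : Finset.univ.filter (fun r => c0 r = l)
              = {(⟨d - k + (l : ℕ), by have := l.isLt; omega⟩ : Fin d)} := by
            ext r
            simp only [mem_filter, mem_univ, true_and, Finset.mem_singleton, hc0]
            have hr := r.isLt
            have hlk := l.isLt
            split_ifs with h
            · constructor
              · intro heq
                exfalso
                have := congrArg Fin.val heq
                simp only at this
                omega
              · intro heq
                exfalso
                have := congrArg Fin.val heq
                simp only at this
                omega
            · rw [Fin.ext_iff, Fin.ext_iff]
              simp only
              omega
          rw [hsingle, Finset.sum_singleton]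
      rw [hfiber]
      
  · -- lower bound
    rintro h ⟨c, hc, rfl⟩
    set q : Fin k → ℝ := fun l => ∑ r ∈ Finset.univ.filter (fun r => c r = l), π r with hq
    have hq_pos : ∀ l, 0 < q l := by
      intro l
      apply Finset.sum_pos (fun r _ => hpos r)
      obtain ⟨r, hr⟩ := hc l
      exact ⟨r, mem_filter.mpr ⟨mem_univ r, hr⟩⟩
    have hq_tot : ∑ l, q l = 1 := by
      rw [hq]
      rw [Finset.sum_fiberwise Finset.univ c π]
      exact hsum
    set σ : Equiv.Perm (Fin k) := Tuple.sort q with hσ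
    have hms : Monotone (q ∘ σ) := Tuple.monotone_sort q
    set aN : ℕ → ℝ := fun i => if h : i < k then q (σ (Fin.rev ⟨i, h⟩)) else 1 with haN
    have haN_val : ∀ i : Fin k, aN ↑i = q (σ i.rev) := by
      intro i
      rw [haN]
      simp only [i.isLt, dif_pos, Fin.eta]
    have hconv : ∀ g : ℝ → ℝ, ∑ i ∈ range k, g (aN i) = ∑ l : Fin k, g (q l) := by
      intro g
      rw [← Fin.sum_univ_eq_sum_range (fun i => g (aN i)) k]
      have h1 : ∀ l : Fin k, g (aN ↑l) = g (q ((Fin.revPerm.trans σ) l)) := by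
        intro l
        rw [haN_val]
        simp [Equiv.trans_apply]
      rw [Finset.sum_congr rfl fun l _ => h1 l]
      exact Equiv.sum_comp (Fin.revPerm.trans σ) (fun l => g (q l))
    have hconvb : ∀ g : ℝ → ℝ, ∑ i ∈ range k, g (bN i)
        = ∑ l : Fin k, g (if (l : ℕ) = 0 then S
            else π ⟨d - k + (l : ℕ), by have := l.isLt; omega⟩) := by
      intro g
      rw [← Fin.sum_univ_eq_sum_range (fun i => g (bN i)) k]
      exact Finset.sum_congr rfl fun l _ => by rw [hBb l]
    have ha_pos : ∀ i < k, 0 < aN i := by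
      intro i hi
      rw [haN]
      simp only [hi, dif_pos]
      exact hq_pos _
    have ha_anti : ∀ i j, i ≤ j → j < k → aN j ≤ aN i := by
      intro i j hij hjk
      have hik : i < k := by omega
      rw [haN]
      simp only [hik, hjk, dif_pos]
      apply hms
      rw [Fin.rev_le_rev]
      exact Fin.mk_le_mk.mpr hij
    have htota : ∑ i ∈ range k, aN i = 1 := by
      have h := hconv id
      simp only [id_eq] at h
      rw [h]
      exact hq_tot
    -- majorization
    have hmaj : ∀ m ≤ k, ∑ i ∈ range m, aN i ≤ ∑ i ∈ range m, bN i := by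
      intro m hm
      rcases Nat.eq_zero_or_pos m with rfl | hm1
      · simp
      -- tail comparison
      have hsplit_a : ∑ i ∈ range m, aN i + ∑ i ∈ Ico m k, aN i = ∑ i ∈ range k, aN i :=
        Finset.sum_range_add_sum_Ico aN hm
      have hsplit_b : ∑ i ∈ range m, bN i + ∑ i ∈ Ico m k, bN i = ∑ i ∈ range k, bN i :=
        Finset.sum_range_add_sum_Ico bN hm
      have htail : ∑ i ∈ Ico m k, bN i ≤ ∑ i ∈ Ico m k, aN i := by
        -- rewrite tail_a as a sum of q over an image set T
        set T : Finset (Fin k) :=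
          (Finset.univ.filter (fun i : Fin k => m ≤ ↑i)).image (fun i => σ i.rev) with hT
        have hinj : Function.Injective (fun i : Fin k => σ i.rev) :=
          fun a b hab => Fin.rev_injective (σ.injective hab)
        have htail_a : ∑ i ∈ Ico m k, aN i = ∑ l ∈ T, q l := by
          have hIco : Ico m k = (range k).filter (fun t => m ≤ t) := by
            ext t; simp only [mem_Ico, mem_filter, mem_range]; omega
          rw [hIco, ← sum_filter_val k (fun t => m ≤ t) aN]
          rw [hT, Finset.sum_image (fun a _ b _ h => hinj h)]
          exact Finset.sum_congr rfl fun i _ => haN_val i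
        have hTcard : T.card = k - m := by
          rw [hT, Finset.card_image_of_injective _ hinj, card_filter_ge_eq]
        have hUT : ∑ l ∈ T, q l
            = ∑ r ∈ Finset.univ.filter (fun r => c r ∈ T), π r := by
          rw [hq]
          exact Finset.sum_fiberwise_eq_sum_filter Finset.univ T c π
        have hUcard : k - m ≤ (Finset.univ.filter (fun r => c r ∈ T)).card := by
          rw [← hTcard]
          apply Finset.card_le_card_of_surjOn c
          intro l hl
          obtain ⟨r, hr⟩ := hc l
          refine ⟨r, ?_, hr⟩
          simp only [Finset.coe_filter, Set.mem_setOf_eq, mem_univ, true_and]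
          rw [hr]
          exact Finset.mem_coe.mp hl
        have hVle := smallest_sum_le d π (fun r => (hpos r).le) hsorted
          (Finset.univ.filter (fun r => c r ∈ T)) (k - m) hUcard
        have htail_b : ∑ i ∈ Ico m k, bN i
            = ∑ r ∈ Finset.univ.filter (fun r : Fin d => d - (k - m) ≤ ↑r), π r := by
          rw [tail_b m hm1 hm]
          have h1 : ∑ r ∈ Finset.univ.filter (fun r : Fin d => d - (k - m) ≤ ↑r), π r
              = ∑ r ∈ Finset.univ.filter (fun r : Fin d => d - (k - m) ≤ ↑r), πe ↑r :=
            Finset.sum_congr rfl fun r _ => (hπe_val r).symm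
          rw [h1, sum_filter_val d (fun t => d - (k - m) ≤ t) πe]
          congr 1
          ext t; simp only [mem_filter, mem_range, mem_Ico]; omega
        rw [htail_a, htail_b, hUT]
        exact hVle
      linarith [hsplit_a, hsplit_b, htota, htotb]

    have key := entropy_maj k aN bN ha_pos hbnonneg ha_anti hmaj (by rw [htota, htotb])
    have hL : ∑ i ∈ range k, -(bN i * Real.log (bN i))
        = -(∑ l : Fin k,
            (if (l : ℕ) = 0 then S
              else π ⟨d - k + (l : ℕ), by have := l.isLt; omega⟩) *
            Real.log (if (l : ℕ) = 0 then S
              else π ⟨d - k + (l : ℕ), by have := l.isLt; omega⟩)) := by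
      rw [← Finset.sum_neg_distrib]
      exact hconvb (fun x => -(x * Real.log x))
    have hR : ∑ i ∈ range k, -(aN i * Real.log (aN i))
        = -(∑ l : Fin k, q l * Real.log (q l)) := by
      rw [← Finset.sum_neg_distrib]
      exact hconv (fun x => -(x * Real.log x))
    rw [hL, hR] at key
    exact key
end

section
/- Fix a partition {V_1,…,V_k} of {1,…,d} and a probability vector π ∈ Δ^{d−1} with positive entries. Among all matrices w ∈ [0,1]^{d×d} with w_{rs} = 0 whenever r and s lie in different blocks, and with both row sums and column sums equal to π (i.e., w𝟙 = wᵀ𝟙 = π), the entropy H(w) = −Σ_{r,s} w_{rs} log w_{rs} is maximized at w*_{rs} = π_r π_s / (Σ_{r'∈V_l} π_{r'}) for r,s ∈ V_l (and 0 otherwise), and the maximum value equals 2H(π) + Σ_{l=1}^k p_l log p_l where p_l = Σ_{r∈V_l} π_r. -/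
open Finset

private lemma gibbs {ι : Type*} (s : Finset ι) (a b : ι → ℝ)
    (ha : ∀ i ∈ s, 0 ≤ a i) (hb : ∀ i ∈ s, 0 ≤ b i)
    (hab : ∀ i ∈ s, a i ≠ 0 → b i ≠ 0)
    (hsum : ∑ i ∈ s, b i ≤ ∑ i ∈ s, a i) :
    ∑ i ∈ s, a i * Real.log (b i) ≤ ∑ i ∈ s, a i * Real.log (a i) := by
  have key : ∀ i ∈ s, a i * Real.log (b i) - a i * Real.log (a i) ≤ b i - a i := by
    intro i hi
    rcases eq_or_lt_of_le (ha i hi) with h0 | h0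
    · simp [← h0]
      exact hb i hi
    · have hbpos : 0 < b i := lt_of_le_of_ne (hb i hi) (Ne.symm (hab i hi (ne_of_gt h0)))
      have hlog : Real.log (b i) - Real.log (a i) ≤ b i / a i - 1 := by
        rw [← Real.log_div (ne_of_gt hbpos) (ne_of_gt h0)]
        exact Real.log_le_sub_one_of_pos (div_pos hbpos h0)
      calc a i * Real.log (b i) - a i * Real.log (a i)
          = a i * (Real.log (b i) - Real.log (a i)) := by ring
        _ ≤ a i * (b i / a i - 1) := mul_le_mul_of_nonneg_left hlog (le_of_lt h0)
        _ = b i - a i := by field_simp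
  have h := Finset.sum_le_sum key
  rw [Finset.sum_sub_distrib, Finset.sum_sub_distrib] at h
  linarith

private lemma gibbs2 {d : ℕ} (a b : Fin d → Fin d → ℝ)
    (ha : ∀ r s, 0 ≤ a r s) (hb : ∀ r s, 0 ≤ b r s)
    (hab : ∀ r s, a r s ≠ 0 → b r s ≠ 0)
    (hsum : ∑ r, ∑ s, b r s ≤ ∑ r, ∑ s, a r s) :
    ∑ r, ∑ s, a r s * Real.log (b r s) ≤ ∑ r, ∑ s, a r s * Real.log (a r s) := by
  have h := gibbs (Finset.univ : Finset (Fin d × Fin d)) (fun q => a q.1 q.2)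
    (fun q => b q.1 q.2) (fun q _ => ha q.1 q.2) (fun q _ => hb q.1 q.2)
    (fun q _ => hab q.1 q.2) ?_
  · simpa [Fintype.sum_prod_type] using h
  · simpa [Fintype.sum_prod_type] using hsum

private lemma sum_mul_log_wstar (d k : ℕ) (c : Fin d → Fin k) (π : Fin d → ℝ)
    (hpos : ∀ r, 0 < π r)
    (w : Fin d → Fin d → ℝ)
    (hblock : ∀ r s, c r ≠ c s → w r s = 0)
    (hrow : ∀ r, ∑ s, w r s = π r)
    (hcol : ∀ s, ∑ r, w r s = π s) :
    ∑ r, ∑ s, w r s * Real.log (if c r = c s then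
        π r * π s / (∑ r' ∈ Finset.univ.filter (fun r' => c r' = c r), π r') else 0)
      = (∑ r, π r * Real.log (π r)) + (∑ r, π r * Real.log (π r))
        - ∑ l : Fin k, (∑ r ∈ Finset.univ.filter (fun r => c r = l), π r) *
            Real.log (∑ r ∈ Finset.univ.filter (fun r => c r = l), π r) := by
  set p : Fin k → ℝ := fun l => ∑ r ∈ Finset.univ.filter (fun r => c r = l), π r with hp_def
  have hP : ∀ r : Fin d, (∑ r' ∈ Finset.univ.filter (fun r' => c r' = c r), π r') = p (c r) :=
    fun r => rfl
  have hppos : ∀ r : Fin d, 0 < p (c r) := by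
    intro r
    rw [← hP r]
    refine Finset.sum_pos (fun i _ => hpos i) ⟨r, by simp⟩
  have hstep : ∀ r s : Fin d, w r s * Real.log (if c r = c s then
        π r * π s / (∑ r' ∈ Finset.univ.filter (fun r' => c r' = c r), π r') else 0)
      = w r s * Real.log (π r) + w r s * Real.log (π s) - w r s * Real.log (p (c r)) := by
    intro r s
    by_cases h : c r = c s
    · rw [if_pos h, hP r, Real.log_div (mul_ne_zero (ne_of_gt (hpos r)) (ne_of_gt (hpos s))) (ne_of_gt (hppos r)),
        Real.log_mul (ne_of_gt (hpos r)) (ne_of_gt (hpos s))]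
      ring
    · rw [if_neg h, hblock r s h]
      ring
  have hsplit : ∀ r : Fin d, ∑ s, (w r s * Real.log (π r) + w r s * Real.log (π s)
        - w r s * Real.log (p (c r)))
      = π r * Real.log (π r) + (∑ s, w r s * Real.log (π s)) - π r * Real.log (p (c r)) := by
    intro r
    rw [Finset.sum_sub_distrib, Finset.sum_add_distrib, ← Finset.sum_mul, ← Finset.sum_mul,
      hrow r]
  calc ∑ r, ∑ s, w r s * Real.log (if c r = c s then
        π r * π s / (∑ r' ∈ Finset.univ.filter (fun r' => c r' = c r), π r') else 0)
      = ∑ r : Fin d, (π r * Real.log (π r) + (∑ s, w r s * Real.log (π s))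
          - π r * Real.log (p (c r))) := by
        refine Finset.sum_congr rfl fun r _ => ?_
        rw [← hsplit r]
        exact Finset.sum_congr rfl fun s _ => hstep r s
    _ = (∑ r, π r * Real.log (π r)) + (∑ r : Fin d, ∑ s, w r s * Real.log (π s))
          - ∑ r : Fin d, π r * Real.log (p (c r)) := by
        rw [Finset.sum_sub_distrib, Finset.sum_add_distrib]
    _ = (∑ r, π r * Real.log (π r)) + (∑ r, π r * Real.log (π r))
        - ∑ l : Fin k, p l * Real.log (p l) := by
        congr 1
        · congr 1
          rw [Finset.sum_comm]
          refine Finset.sum_congr rfl fun s _ => ?_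
          rw [← Finset.sum_mul, hcol s]
        · rw [← Finset.sum_fiberwise (Finset.univ : Finset (Fin d)) c
            (fun r => π r * Real.log (p (c r)))]
          refine Finset.sum_congr rfl fun l _ => ?_
          rw [show ∑ r ∈ Finset.univ.filter (fun r => c r = l), π r * Real.log (p (c r))
              = ∑ r ∈ Finset.univ.filter (fun r => c r = l), π r * Real.log (p l) from
            Finset.sum_congr rfl fun r hr => by
              rw [(Finset.mem_filter.mp hr).2]]
          rw [← Finset.sum_mul]


/-- Fix a partition of `{1,…,d}` into `k` blocks (encoded by a surjection `c : Fin d → Fin k`)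
and a strictly positive probability vector `π`.  Among matrices `w ∈ [0,1]^{d×d}` vanishing
off the diagonal blocks, with row sums and column sums both equal to `π`, the entropy
`H(w) = −Σ w_{rs} log w_{rs}` is maximized at `w*_{rs} = π_r π_s / p_{c(r)}` for `r,s` in the
same block (`0` otherwise), and the maximum equals `2H(π) + Σ_l p_l log p_l` where
`p_l = Σ_{r ∈ V_l} π_r`. -/
theorem entropy_block_marginal_max (d k : ℕ) (c : Fin d → Fin k)
    (hc : Function.Surjective c) (π : Fin d → ℝ)
    (hpos : ∀ r, 0 < π r) (hsum : ∑ r, π r = 1) :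
    (∀ r s : Fin d,
        (if c r = c s then
            π r * π s / (∑ r' ∈ Finset.univ.filter (fun r' => c r' = c r), π r')
          else 0) ∈ Set.Icc (0:ℝ) 1) ∧
    (∀ r : Fin d,
        (∑ s, (if c r = c s then
            π r * π s / (∑ r' ∈ Finset.univ.filter (fun r' => c r' = c r), π r') else 0)) = π r) ∧
    (∀ s : Fin d,
        (∑ r, (if c r = c s then
            π r * π s / (∑ r' ∈ Finset.univ.filter (fun r' => c r' = c r), π r') else 0)) = π s) ∧
    (∀ w : Fin d → Fin d → ℝ,
        (∀ r s, w r s ∈ Set.Icc (0:ℝ) 1) →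
        (∀ r s, c r ≠ c s → w r s = 0) →
        (∀ r, ∑ s, w r s = π r) →
        (∀ s, ∑ r, w r s = π s) →
        -(∑ r, ∑ s, w r s * Real.log (w r s)) ≤
          -(∑ r, ∑ s,
            (if c r = c s then
                π r * π s / (∑ r' ∈ Finset.univ.filter (fun r' => c r' = c r), π r') else 0) *
            Real.log
              (if c r = c s then
                π r * π s / (∑ r' ∈ Finset.univ.filter (fun r' => c r' = c r), π r') else 0))) ∧
    -(∑ r, ∑ s,
        (if c r = c s then
            π r * π s / (∑ r' ∈ Finset.univ.filter (fun r' => c r' = c r), π r') else 0) *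
        Real.log
          (if c r = c s then
            π r * π s / (∑ r' ∈ Finset.univ.filter (fun r' => c r' = c r), π r') else 0)) =
      2 * (-(∑ r, π r * Real.log (π r))) +
        ∑ l : Fin k, (∑ r ∈ Finset.univ.filter (fun r => c r = l), π r) *
          Real.log (∑ r ∈ Finset.univ.filter (fun r => c r = l), π r) := by
  set p : Fin k → ℝ := fun l => ∑ r ∈ Finset.univ.filter (fun r => c r = l), π r with hp_def
  have hP : ∀ r : Fin d, (∑ r' ∈ Finset.univ.filter (fun r' => c r' = c r), π r') = p (c r) :=
    fun r => rfl
  have hppos : ∀ r : Fin d, 0 < p (c r) := by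
    intro r
    rw [← hP r]
    refine Finset.sum_pos (fun i _ => hpos i) ⟨r, by simp⟩
  have hπ1 : ∀ r, π r ≤ 1 := by
    intro r
    rw [← hsum]
    exact Finset.single_le_sum (fun i _ => (hpos i).le) (Finset.mem_univ r)
  have hπp : ∀ r, π r ≤ p (c r) := by
    intro r
    rw [← hP r]
    exact Finset.single_le_sum (fun i _ => (hpos i).le) (by simp)
  have hp1 : ∀ l, p l ≤ 1 := by
    intro l
    rw [← hsum]
    exact Finset.sum_le_sum_of_subset_of_nonneg (Finset.filter_subset _ _)
      (fun i _ _ => (hpos i).le)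
  -- Part 1
  have part1 : ∀ r s : Fin d,
      (if c r = c s then
          π r * π s / (∑ r' ∈ Finset.univ.filter (fun r' => c r' = c r), π r')
        else 0) ∈ Set.Icc (0:ℝ) 1 := by
    intro r s
    by_cases h : c r = c s
    · rw [if_pos h, hP r]
      constructor
      · exact div_nonneg (mul_nonneg (hpos r).le (hpos s).le) (hppos r).le
      · rw [div_le_one (hppos r)]
        calc π r * π s ≤ p (c r) * 1 :=
              mul_le_mul (hπp r) (hπ1 s) (hpos s).le (hppos r).le
          _ = p (c r) := mul_one _
    · rw [if_neg h]
      exact ⟨le_refl 0, zero_le_one⟩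
  -- Part 2
  have part2 : ∀ r : Fin d,
      (∑ s, (if c r = c s then
          π r * π s / (∑ r' ∈ Finset.univ.filter (fun r' => c r' = c r), π r') else 0)) = π r := by
    intro r
    simp only [hP]
    rw [← Finset.sum_filter]
    have hfil : Finset.univ.filter (fun s => c r = c s)
        = Finset.univ.filter (fun s => c s = c r) := by
      simp [eq_comm]
    rw [hfil, ← Finset.sum_div, ← Finset.mul_sum,
      show (∑ s ∈ Finset.univ.filter (fun s => c s = c r), π s) = p (c r) from rfl,
      mul_div_assoc, div_self (ne_of_gt (hppos r)), mul_one]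
  -- Part 3
  have part3 : ∀ s : Fin d,
      (∑ r, (if c r = c s then
          π r * π s / (∑ r' ∈ Finset.univ.filter (fun r' => c r' = c r), π r') else 0)) = π s := by
    intro s
    simp only [hP]
    rw [← Finset.sum_filter]
    have hcong : ∑ r ∈ Finset.univ.filter (fun r => c r = c s), π r * π s / p (c r)
        = ∑ r ∈ Finset.univ.filter (fun r => c r = c s), π r * π s / p (c s) :=
      Finset.sum_congr rfl fun r hr => by rw [(Finset.mem_filter.mp hr).2]
    rw [hcong, ← Finset.sum_div, ← Finset.sum_mul,
      show (∑ r ∈ Finset.univ.filter (fun r => c r = c s), π r) = p (c s) from rfl,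
      mul_comm, mul_div_assoc, div_self (ne_of_gt (hppos s)), mul_one]
  -- key value for the optimizer
  have hblockstar : ∀ r s, c r ≠ c s →
      (if c r = c s then
          π r * π s / (∑ r' ∈ Finset.univ.filter (fun r' => c r' = c r), π r') else 0) = 0 :=
    fun r s h => if_neg h
  have hkeystar : (∑ r, ∑ s,
        (if c r = c s then
            π r * π s / (∑ r' ∈ Finset.univ.filter (fun r' => c r' = c r), π r') else 0) *
        Real.log
          (if c r = c s then
            π r * π s / (∑ r' ∈ Finset.univ.filter (fun r' => c r' = c r), π r') else 0))
      = (∑ r, π r * Real.log (π r)) + (∑ r, π r * Real.log (π r))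
        - ∑ l : Fin k, (∑ r ∈ Finset.univ.filter (fun r => c r = l), π r) *
            Real.log (∑ r ∈ Finset.univ.filter (fun r => c r = l), π r) :=
    sum_mul_log_wstar d k c π hpos _ hblockstar part2 part3
  refine ⟨part1, part2, part3, ?_, by linarith [hkeystar]⟩
  intro w hw01 hblock hrow hcol
  have hkey : (∑ r, ∑ s, w r s *
        Real.log
          (if c r = c s then
            π r * π s / (∑ r' ∈ Finset.univ.filter (fun r' => c r' = c r), π r') else 0))
      = (∑ r, π r * Real.log (π r)) + (∑ r, π r * Real.log (π r))
        - ∑ l : Fin k, (∑ r ∈ Finset.univ.filter (fun r => c r = l), π r) *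
            Real.log (∑ r ∈ Finset.univ.filter (fun r => c r = l), π r) :=
    sum_mul_log_wstar d k c π hpos w hblock hrow hcol
  have hbsum : (∑ r, ∑ s,
      (if c r = c s then
          π r * π s / (∑ r' ∈ Finset.univ.filter (fun r' => c r' = c r), π r') else 0)) = 1 := by
    rw [Finset.sum_congr rfl (fun r _ => part2 r)]
    exact hsum
  have hasum : (∑ r, ∑ s, w r s) = 1 := by
    rw [Finset.sum_congr rfl (fun r _ => hrow r)]
    exact hsum
  have hg : (∑ r, ∑ s, w r s *
        Real.log
          (if c r = c s then
            π r * π s / (∑ r' ∈ Finset.univ.filter (fun r' => c r' = c r), π r') else 0))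
      ≤ ∑ r, ∑ s, w r s * Real.log (w r s) := by
    refine gibbs2 w _ (fun r s => (hw01 r s).1) (fun r s => (part1 r s).1) ?_ ?_
    · intro r s hne
      by_cases h : c r = c s
      · rw [if_pos h, hP r]
        exact ne_of_gt (div_pos (mul_pos (hpos r) (hpos s)) (hppos r))
      · exact absurd (hblock r s h) hne
    · rw [hbsum, hasum]
  linarith [hkey, hkeystar, hg]
end

section
/- Let F = { x ∈ ℝ^{d×d} : xᵀ𝟙 = x𝟙 }. The orthogonal complement of F in ℝ^{d×d} (with respect to the Frobenius inner product) equals { λ𝟙ᵀ − 𝟙λᵀ : λ ∈ ℝ^d }, a subspace of dimension d−1. -/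
open Finset
open scoped RealInnerProductSpace

/-- The subspace of `ℝ^{d×d}` (as a Euclidean space, i.e. with the Frobenius inner product)
consisting of matrices whose row sums equal their column sums coordinatewise. -/
def rcSpace (d : ℕ) : Submodule ℝ (EuclideanSpace ℝ (Fin d × Fin d)) where
  carrier := { x | ∀ r, ∑ s, x (r, s) = ∑ s, x (s, r) }
  add_mem' := by
    intro a b ha hb r
    simp [Finset.sum_add_distrib, ha r, hb r]
  zero_mem' := by intro r; simp
  smul_mem' := by
    intro t a ha r
    simp [← Finset.mul_sum, ha r]

/-
`F` is the annihilator of the matrices `λ𝟙ᵀ − 𝟙λᵀ`: pairing such a matrix with `x` gives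
`∑ᵣ λᵣ ((x𝟙)ᵣ − (xᵀ𝟙)ᵣ)`, which vanishes for every `λ` exactly when `x ∈ F`. Hence `Fᗮ` is the range
of the linear map `λ ↦ λ𝟙ᵀ − 𝟙λᵀ`, whose kernel is the line of constant vectors, so by rank–nullity
the range has dimension `d − 1`.
-/

section PairwiseDiff

variable (ι : Type*)

/-- The linear map `λ ↦ λ𝟙ᵀ − 𝟙λᵀ`. -/
def pairwiseDiff : (ι → ℝ) →ₗ[ℝ] EuclideanSpace ℝ (ι × ι) where
  toFun l := WithLp.toLp 2 fun p => l p.1 - l p.2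
  map_add' a b := by ext p; simp only [PiLp.add_apply, Pi.add_apply]; ring
  map_smul' t a := by ext p; simp [mul_sub]

variable {ι}

@[simp]
theorem pairwiseDiff_apply (l : ι → ℝ) (p : ι × ι) : pairwiseDiff ι l p = l p.1 - l p.2 := rfl

theorem inner_pairwiseDiff [Fintype ι] (l : ι → ℝ) (x : EuclideanSpace ℝ (ι × ι)) :
    ⟪pairwiseDiff ι l, x⟫ = ∑ r, l r * (∑ s, x (r, s) - ∑ s, x (s, r)) := by
  simp only [PiLp.inner_apply, RCLike.inner_apply, conj_trivial, Fintype.sum_prod_type,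
    pairwiseDiff_apply, mul_sub, Finset.mul_sum, Finset.sum_sub_distrib]
  rw [Finset.sum_comm (f := fun r s => x (r, s) * l s)]
  simp only [mul_comm]

theorem coe_range_pairwiseDiff :
    (LinearMap.range (pairwiseDiff ι) : Set (EuclideanSpace ℝ (ι × ι))) =
      {z | ∃ l : ι → ℝ, ∀ p : ι × ι, z p = l p.1 - l p.2} := by
  ext z
  simp only [SetLike.mem_coe, LinearMap.mem_range, Set.mem_ofPred_eq]
  constructor
  · rintro ⟨l, rfl⟩
    exact ⟨l, fun _ => rfl⟩
  · rintro ⟨l, hl⟩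
    exact ⟨l, PiLp.ext fun p => (hl p).symm⟩

theorem ker_pairwiseDiff [Nonempty ι] :
    LinearMap.ker (pairwiseDiff ι) = ℝ ∙ (1 : ι → ℝ) := by
  ext l
  rw [LinearMap.mem_ker, Submodule.mem_span_singleton]
  obtain ⟨i₀⟩ := ‹Nonempty ι›
  constructor
  · intro hl
    refine ⟨l i₀, funext fun i => ?_⟩
    have hi : l i - l i₀ = 0 := by simpa using congrArg (· (i, i₀)) hl
    simp only [Pi.smul_apply, Pi.one_apply, smul_eq_mul, mul_one]
    linarith
  · rintro ⟨a, rfl⟩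
    ext p
    simp

theorem finrank_range_pairwiseDiff [Fintype ι] :
    Module.finrank ℝ (LinearMap.range (pairwiseDiff ι)) = Fintype.card ι - 1 := by
  rcases isEmpty_or_nonempty ι with hι | hι
  · have := (LinearMap.range (pairwiseDiff ι)).finrank_le
    simp_all
  · have hker : Module.finrank ℝ (LinearMap.ker (pairwiseDiff ι)) = 1 := by
      rw [ker_pairwiseDiff]
      exact finrank_span_singleton one_ne_zero
    have := LinearMap.finrank_range_add_finrank_ker (pairwiseDiff ι)
    rw [hker, Module.finrank_fintype_fun_eq_card] at this
    omega

end PairwiseDiff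

theorem rcSpace_eq_orthogonal_range_pairwiseDiff (d : ℕ) :
    rcSpace d = (LinearMap.range (pairwiseDiff (Fin d)))ᗮ := by
  ext x
  rw [Submodule.mem_orthogonal]
  constructor
  · rintro hx _ ⟨l, rfl⟩
    rw [inner_pairwiseDiff]
    exact Finset.sum_eq_zero fun r _ => by rw [hx r, sub_self, mul_zero]
  · intro hx r
    have h := hx (pairwiseDiff (Fin d) (Pi.single r 1)) ⟨_, rfl⟩
    simp only [inner_pairwiseDiff, Pi.single_apply, ite_mul, one_mul, zero_mul,
      Finset.sum_ite_eq', Finset.mem_univ, if_true] at h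
    linarith

theorem rcSpace_orthogonal_general (d : ℕ) :
    ((rcSpace d)ᗮ : Set (EuclideanSpace ℝ (Fin d × Fin d))) =
      { z | ∃ l : Fin d → ℝ, ∀ p : Fin d × Fin d, z p = l p.1 - l p.2 } ∧
    Module.finrank ℝ ((rcSpace d)ᗮ) = d - 1 := by
  have hF : (rcSpace d)ᗮ = LinearMap.range (pairwiseDiff (Fin d)) := by
    rw [rcSpace_eq_orthogonal_range_pairwiseDiff, Submodule.orthogonal_orthogonal]
  rw [hF, coe_range_pairwiseDiff, finrank_range_pairwiseDiff, Fintype.card_fin]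
  exact ⟨rfl, rfl⟩

/-- The orthogonal complement of `F = {x : xᵀ𝟙 = x𝟙}` in `ℝ^{d×d}` with the Frobenius
inner product equals `{ λ𝟙ᵀ − 𝟙λᵀ : λ ∈ ℝ^d }`, the antisymmetric matrices with entries
`λ_r − λ_s`, a subspace of dimension `d − 1`. -/
theorem rcSpace_orthogonal (d : ℕ) (hd : 1 ≤ d) :
    ((rcSpace d)ᗮ : Set (EuclideanSpace ℝ (Fin d × Fin d))) =
      { z | ∃ l : Fin d → ℝ, ∀ p : Fin d × Fin d, z p = l p.1 - l p.2 } ∧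
    Module.finrank ℝ ((rcSpace d)ᗮ) = d - 1 :=
  rcSpace_orthogonal_general d
end

section
/- Let L(w) be the weighted Laplacian matrix of the complete graph on d vertices with symmetric positive edge weights w_{rs}. Then for x > 0, Det(xI + L(w)) = Σ_F x^{|roots(F)|} Π_{(r,s)∈F} w_{rs}, where the sum is over all rooted spanning forests F of the graph and |roots(F)| is the number of trees (roots) in F. -/
open Finset
open scoped Classical

/-- The weighted Laplacian of the complete graph on `d` vertices:
`L_{rr} = Σ_{s ≠ r} w_{rs}` and `L_{rs} = −w_{rs}` for `r ≠ s`. -/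
def weightedLaplacian (d : ℕ) (w : Fin d → Fin d → ℝ) : Matrix (Fin d) (Fin d) ℝ :=
  fun r s => if r = s then ∑ t ∈ Finset.univ.erase r, w r t else -(w r s)

/-- A rooted spanning forest on `Fin d`: an acyclic graph together with a choice function
picking one root in each connected component. -/
def IsRootedSpanningForest {d : ℕ} (G : SimpleGraph (Fin d)) (root : Fin d → Fin d) : Prop :=
  G.IsAcyclic ∧ (∀ v, G.Reachable v (root v)) ∧ ∀ v u, G.Reachable v u → root v = root u

/-!
Expand `det (x • 1 + L)` over permutations `σ` and, in each diagonal entry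
`x + ∑_{t ≠ i} w i t`, over the chosen summand: this records a map `f : Fin d → Fin d`
(`f i = i` for the summand `x`) which must agree with `σ` on the support of `σ`. Such `σ` are
exactly the products of sets of cycles of `f`, and `sign σ · (-1)^|supp σ| = (-1)^(number of
cycles of σ)`, so for fixed `f` the signed count is `∑_{S ⊆ cycles f} (-1)^|S|`. It vanishes
unless `f` has no periodic points besides its fixed points, and those maps are the rooted
spanning forests: edges `{v, f v}`, roots the fixed points, and conversely `f v` is the
neighbour of `v` on its path to the root.
-/

namespace Equiv.Perm

variable {α : Type*} [Fintype α] [DecidableEq α]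

theorem sign_mul_neg_one_pow_card_support (σ : Perm α) :
    (sign σ : ℤ) * (-1) ^ #σ.support = (-1) ^ #σ.cycleFactorsFinset := by
  have hcard : Multiset.card σ.cycleType = #σ.cycleFactorsFinset := by
    rw [cycleType_def, Multiset.card_map]; rfl
  rw [sign_of_cycleType, sum_cycleType, hcard]
  push_cast
  rw [pow_add, mul_right_comm, ← pow_add, ← two_mul, pow_mul, neg_one_sq, one_pow, one_mul]

theorem cycleFactorsFinset_subset_iff {σ π : Perm α} :
    σ.cycleFactorsFinset ⊆ π.cycleFactorsFinset ↔ ∀ x ∈ σ.support, σ x = π x := by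
  constructor
  · intro h x hx
    have hc := h (cycleOf_mem_cycleFactorsFinset_iff.mpr hx)
    rw [← cycleOf_apply_self]
    exact (mem_cycleFactorsFinset_iff.mp hc).2 x
      (mem_support_cycleOf_iff.mpr ⟨SameCycle.refl _ _, hx⟩)
  · intro h c hc
    obtain ⟨hcycle, hcσ⟩ := mem_cycleFactorsFinset_iff.mp hc
    exact mem_cycleFactorsFinset_iff.mpr ⟨hcycle, fun a ha =>
      (hcσ a ha).trans (h a (mem_cycleFactorsFinset_support_le hc ha))⟩

theorem image_cycleFactorsFinset_filter_subset (π : Perm α) :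
    (univ.filter fun σ : Perm α => σ.cycleFactorsFinset ⊆ π.cycleFactorsFinset).image
      cycleFactorsFinset =
      π.cycleFactorsFinset.powerset := by
  ext S
  simp only [mem_image, mem_filter, mem_univ, true_and, mem_powerset]
  constructor
  · rintro ⟨σ, hσ, rfl⟩
    exact hσ
  · intro hS
    have hdisj : (S : Set (Perm α)).Pairwise Disjoint :=
      (cycleFactorsFinset_pairwise_disjoint π).mono hS
    have hprod : (S.noncommProd id (hdisj.mono' fun _ _ => Disjoint.commute)).cycleFactorsFinset
        = S :=
      cycleFactorsFinset_eq_finset.mpr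
        ⟨fun c hc => (mem_cycleFactorsFinset_iff.mp (hS hc)).1, hdisj, rfl⟩
    exact ⟨_, by rwa [hprod], hprod⟩

theorem sum_neg_one_pow_card_cycleFactorsFinset_subset (π : Perm α) :
    ∑ σ : Perm α with σ.cycleFactorsFinset ⊆ π.cycleFactorsFinset,
      (-1 : ℤ) ^ #σ.cycleFactorsFinset = if π = 1 then 1 else 0 := by
  rw [← sum_image (f := fun S => (-1 : ℤ) ^ #S) cycleFactorsFinset_injective.injOn,
    image_cycleFactorsFinset_filter_subset, sum_powerset_neg_one_pow_card]
  exact if_congr cycleFactorsFinset_eq_empty_iff rfl rfl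

theorem pow_apply_eq_iterate {σ : Perm α} {f : α → α} (h : ∀ x ∈ σ.support, σ x = f x)
    {x : α} (hx : x ∈ σ.support) (n : ℕ) : (σ ^ n) x = f^[n] x := by
  induction n generalizing x with
  | zero => rfl
  | succ n ih =>
    rw [pow_succ, mul_apply, ih (apply_mem_support.mpr hx), h x hx, Function.iterate_succ_apply]

theorem mem_periodicPts_of_mem_support {σ : Perm α} {f : α → α}
    (h : ∀ x ∈ σ.support, σ x = f x) {x : α} (hx : x ∈ σ.support) :
    x ∈ Function.periodicPts f :=
  Function.mk_mem_periodicPts (orderOf_pos σ) <| by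
    rw [Function.IsPeriodicPt, Function.IsFixedPt, ← pow_apply_eq_iterate h hx,
      pow_orderOf_eq_one, one_apply]

end Equiv.Perm

namespace Function

open Equiv

variable {α : Type*}

noncomputable def cyclicPart (f : α → α) : Perm α :=
  Perm.ofSubtype ((bijOn_periodicPts f).equiv f)

variable {f : α → α} {x : α}

theorem cyclicPart_apply_of_mem (hx : x ∈ periodicPts f) : cyclicPart f x = f x :=
  Perm.ofSubtype_apply_of_mem _ hx

theorem cyclicPart_apply_of_notMem (hx : x ∉ periodicPts f) : cyclicPart f x = x :=
  Perm.ofSubtype_apply_of_not_mem _ hx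

theorem cyclicPart_eq_one_iff : cyclicPart f = 1 ↔ periodicPts f ⊆ fixedPoints f := by
  constructor
  · intro h x hx
    rw [mem_fixedPoints, IsFixedPt, ← cyclicPart_apply_of_mem hx, h, Perm.one_apply]
  · intro h
    ext x
    by_cases hx : x ∈ periodicPts f
    · rw [cyclicPart_apply_of_mem hx, Perm.one_apply]; exact h hx
    · rw [cyclicPart_apply_of_notMem hx, Perm.one_apply]

theorem forall_support_eq_cyclicPart_iff [Fintype α] [DecidableEq α] {σ : Perm α} :
    (∀ x ∈ σ.support, σ x = cyclicPart f x) ↔ ∀ x ∈ σ.support, σ x = f x := by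
  constructor
  · intro h x hx
    have hper : x ∈ periodicPts f := by
      by_contra hper
      exact Perm.mem_support.mp hx ((h x hx).trans (cyclicPart_apply_of_notMem hper))
    rw [h x hx, cyclicPart_apply_of_mem hper]
  · intro h x hx
    rw [h x hx, cyclicPart_apply_of_mem (Perm.mem_periodicPts_of_mem_support h hx)]

theorem sum_sign_mul_neg_one_pow_card_support [Fintype α] [DecidableEq α] (f : α → α) :
    ∑ σ : Perm α with ∀ x ∈ σ.support, σ x = f x, (Perm.sign σ : ℤ) * (-1) ^ #σ.support =
      if periodicPts f ⊆ fixedPoints f then 1 else 0 := by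
  have hfilter : (univ.filter fun σ : Perm α => ∀ x ∈ σ.support, σ x = f x) =
      univ.filter fun σ => σ.cycleFactorsFinset ⊆ (cyclicPart f).cycleFactorsFinset :=
    filter_congr fun σ _ => by
      rw [Perm.cycleFactorsFinset_subset_iff, forall_support_eq_cyclicPart_iff]
  rw [hfilter, sum_congr rfl fun σ _ => Perm.sign_mul_neg_one_pow_card_support σ,
    Perm.sum_neg_one_pow_card_cycleFactorsFinset_subset]
  exact if_congr cyclicPart_eq_one_iff rfl rfl

theorem iterate_card_mem_periodicPts [Fintype α] (f : α → α) (x : α) :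
    f^[Fintype.card α] x ∈ periodicPts f := by
  obtain ⟨i, j, hij, heq⟩ := Fintype.exists_ne_map_eq_of_card_lt
    (fun n : Fin (Fintype.card α + 1) => f^[n] x) (by simp)
  wlog hlt : i < j generalizing i j
  · exact this j i hij.symm heq.symm (lt_of_le_of_ne (not_lt.mp hlt) hij.symm)
  have hper : f^[i] x ∈ periodicPts f := by
    refine mk_mem_periodicPts (Nat.sub_pos_of_lt hlt) ?_
    rw [IsPeriodicPt, IsFixedPt, ← iterate_add_apply, Nat.sub_add_cancel hlt.le]
    exact heq.symm
  have hsplit : f^[Fintype.card α] x = f^[Fintype.card α - i] (f^[i] x) := by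
    rw [← iterate_add_apply, Nat.sub_add_cancel (Nat.lt_succ_iff.mp i.2)]
  rw [hsplit]
  exact (bijOn_periodicPts f).mapsTo.iterate _ hper

theorem isFixedPt_of_iterate_succ_eq (hf : periodicPts f ⊆ fixedPoints f) {k : ℕ}
    (hx : f^[k + 1] x = x) : IsFixedPt f x :=
  hf (mk_mem_periodicPts k.succ_pos hx)

end Function

namespace Matrix

open Equiv

variable {α R : Type*} [Fintype α] [DecidableEq α] [CommRing R]

theorem prod_rowSum_sub_apply_perm (c : α → α → R) (σ : Perm α) :
    ∏ i, (of fun i j => if i = j then ∑ k, c i k else -c i j : Matrix α α R) i (σ i) =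
      (-1) ^ #σ.support * ∑ f : α → α with ∀ x ∈ σ.support, σ x = f x, ∏ i, c i (f i) := by
  have hentry : ∀ i, (of fun i j => if i = j then ∑ k, c i k else -c i j : Matrix α α R) i (σ i)
      = ∑ k, if σ i = i then c i k else if k = σ i then -c i k else 0 := by
    intro i
    by_cases h : σ i = i
    · simp [h]
    · simp [h, Ne.symm h]
  rw [prod_congr rfl fun i _ => hentry i, Fintype.prod_sum, mul_sum, sum_filter]
  refine sum_congr rfl fun f _ => ?_
  split_ifs with hf
  · have hfactor : ∀ i, (if σ i = i then c i (f i) else if f i = σ i then -c i (f i) else 0) =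
        (if σ i = i then 1 else -1) * c i (f i) := by
      intro i
      by_cases h : σ i = i
      · simp [h]
      · simp [h, (hf i (Perm.mem_support.mpr h)).symm]
    rw [prod_congr rfl fun i _ => hfactor i, prod_mul_distrib, prod_ite, prod_const_one,
      prod_const, one_mul]
    rfl
  · obtain ⟨x, hx, hfx⟩ := not_forall₂.mp hf
    exact prod_eq_zero (mem_univ x) (by simp [Perm.mem_support.mp hx, Ne.symm hfx])

theorem det_rowSum_sub_eq_sum_acyclicMaps (c : α → α → R) :
    (of fun i j => if i = j then ∑ k, c i k else -c i j : Matrix α α R).det =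
      ∑ f : α → α with Function.periodicPts f ⊆ Function.fixedPoints f, ∏ i, c i (f i) := by
  calc _ = ∑ σ : Perm α, ∑ f : α → α, if ∀ x ∈ σ.support, σ x = f x then
        ((Perm.sign σ : ℤ) * (-1) ^ #σ.support) • ∏ i, c i (f i) else 0 := by
        rw [← det_transpose, det_apply]
        refine sum_congr rfl fun σ _ => ?_
        simp only [transpose_apply, prod_rowSum_sub_apply_perm, mul_sum, smul_sum, sum_filter]
        refine sum_congr rfl fun f _ => ?_
        split_ifs <;> simp [Units.smul_def, mul_smul]
    _ = ∑ f : α → α, (∑ σ : Perm α with ∀ x ∈ σ.support, σ x = f x,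
        (Perm.sign σ : ℤ) * (-1) ^ #σ.support) • ∏ i, c i (f i) := by
        rw [sum_comm]
        simp only [sum_smul, sum_filter, ite_smul, zero_smul]
    _ = _ := by
        rw [sum_filter]
        refine sum_congr rfl fun f _ => ?_
        rw [Function.sum_sign_mul_neg_one_pow_card_support]
        split_ifs <;> simp

end Matrix

open Function

namespace SimpleGraph

variable {V : Type*}

def functionalGraph (f : V → V) : SimpleGraph V := fromRel fun u v => f u = v

@[simp]
theorem functionalGraph_adj {f : V → V} {u v : V} :
    (functionalGraph f).Adj u v ↔ u ≠ v ∧ (f u = v ∨ f v = u) :=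
  fromRel_adj ..

theorem reachable_functionalGraph_iterate (f : V → V) (v : V) (n : ℕ) :
    (functionalGraph f).Reachable v (f^[n] v) := by
  induction n generalizing v with
  | zero => rfl
  | succ n ih =>
    rw [iterate_succ_apply]
    refine Reachable.trans ?_ (ih (f v))
    by_cases h : v = f v
    · rw [← h]
    · exact Adj.reachable (by simp [h])

theorem exists_iterate_eq_of_reachable_deleteEdges {f : V → V} {a z z' : V}
    (h : ((functionalGraph f).deleteEdges {s(a, f a)}).Reachable z z')
    (hz : ∃ k, f^[k] z = a) : ∃ k, f^[k] z' = a := by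
  obtain ⟨p⟩ := h
  induction p with
  | nil => exact hz
  | @cons u v _ hadj _ ih =>
    apply ih
    obtain ⟨k, hk⟩ := hz
    rw [deleteEdges_adj, functionalGraph_adj] at hadj
    obtain ⟨⟨-, h | h⟩, hnot⟩ := hadj
    · cases k with
      | zero => exact absurd (by simp [← hk, ← h]) hnot
      | succ k => exact ⟨k, by rwa [iterate_succ_apply, h] at hk⟩
    · exact ⟨k + 1, by rw [iterate_succ_apply, h, hk]⟩

theorem isAcyclic_functionalGraph {f : V → V} (hf : periodicPts f ⊆ fixedPoints f) :
    (functionalGraph f).IsAcyclic := by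
  -- an edge `{a, f a}` on a cycle would put `a` on a cycle of `f`
  have hbridge : ∀ a, a ≠ f a → (functionalGraph f).IsBridge s(a, f a) := by
    intro a ha hreach
    obtain ⟨k, hk⟩ := exists_iterate_eq_of_reachable_deleteEdges hreach ⟨0, rfl⟩
    exact ha (isFixedPt_of_iterate_succ_eq hf (by rwa [iterate_succ_apply])).symm
  rw [isAcyclic_iff_forall_adj_isBridge]
  intro u v huv
  obtain ⟨hne, rfl | rfl⟩ := functionalGraph_adj.mp huv
  · exact hbridge u hne
  · rw [Sym2.eq_swap]
    exact hbridge v hne.symm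

theorem iterate_card_eq_of_reachable [Fintype V] {f : V → V} (hf : periodicPts f ⊆ fixedPoints f)
    {u v : V} (h : (functionalGraph f).Reachable u v) :
    f^[Fintype.card V] u = f^[Fintype.card V] v := by
  have hstep : ∀ x, f^[Fintype.card V] (f x) = f^[Fintype.card V] x := fun x => by
    rw [← iterate_succ_apply, iterate_succ_apply']
    exact hf (iterate_card_mem_periodicPts f x)
  obtain ⟨p⟩ := h
  induction p with
  | nil => rfl
  | @cons u v _ hadj _ ih =>
    rw [← ih]
    obtain ⟨-, rfl | rfl⟩ := functionalGraph_adj.mp hadj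
    · exact (hstep u).symm
    · exact hstep v

noncomputable def parentMap (G : SimpleGraph V) (r : V → V) (v : V) : V :=
  if h : G.Reachable v (r v) then (h.some.toPath : G.Walk v (r v)).snd else v

variable {G : SimpleGraph V} {r : V → V}

theorem parentMap_eq_snd (hG : G.IsAcyclic) {v w : V} (hw : r v = w) {p : G.Walk v w}
    (hp : p.IsPath) : parentMap G r v = p.snd := by
  subst hw
  have : Subsingleton (G.Path v (r v)) := hG.subsingleton_path v (r v)
  rw [parentMap, dif_pos ⟨p⟩]
  exact congrArg (fun q : G.Path v (r v) => (q : G.Walk v (r v)).snd) (Subsingleton.elim _ ⟨p, hp⟩)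

theorem adj_parentMap {v : V} (h : parentMap G r v ≠ v) : G.Adj v (parentMap G r v) := by
  unfold parentMap at h ⊢
  split_ifs at h ⊢ with hr
  · refine Walk.adj_snd fun hnil => h ?_
    exact (Walk.getVert_of_length_le _ (by simp [Walk.length_eq_zero_iff.mpr hnil])).trans
      hnil.eq.symm
  · exact absurd rfl h

section RootedForest

variable (hG : G.IsAcyclic) (hr : ∀ v, G.Reachable v (r v))
  (hr' : ∀ v u, G.Reachable v u → r v = r u)
include hG

include hr' in
theorem iterate_parentMap_of_length_le (n : ℕ) {v w : V} (p : G.Walk v w) (hp : p.IsPath)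
    (hw : r v = w) (hn : p.length ≤ n) : (parentMap G r)^[n] v = r v := by
  induction n generalizing v with
  | zero =>
    obtain rfl := Walk.eq_of_length_eq_zero (Nat.le_zero.mp hn)
    exact hw.symm
  | succ n ih =>
    cases p with
    | nil =>
      rw [hw]
      exact iterate_fixed (parentMap_eq_snd hG hw hp) _
    | @cons _ u _ hadj q =>
      rw [iterate_succ_apply, parentMap_eq_snd hG hw hp, Walk.snd_cons,
        ih q hp.of_cons ((hr' u v hadj.symm.reachable).trans hw) (by simpa using hn)]
      exact hr' u v hadj.symm.reachable

include hr hr' in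
theorem iterate_parentMap_of_card_le [Fintype V] {n : ℕ} (hn : Fintype.card V ≤ n) (v : V) :
    (parentMap G r)^[n] v = r v :=
  let p := (hr v).some.toPath
  iterate_parentMap_of_length_le hG hr' n p.1 p.2 rfl (p.2.length_lt.le.trans hn)

include hr hr' in
theorem periodicPts_parentMap_subset [Fintype V] :
    periodicPts (parentMap G r) ⊆ fixedPoints (parentMap G r) := by
  rintro x ⟨k, hk, hx⟩
  have hroot : x = r x := by
    rw [← iterate_parentMap_of_card_le hG hr hr' (n := k * Fintype.card V)
      (Nat.le_mul_of_pos_left _ hk), (hx.mul_const _).eq]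
  have hfix := iterate_parentMap_of_card_le hG hr hr' (Nat.le_succ (Fintype.card V)) x
  rw [iterate_succ_apply', iterate_parentMap_of_card_le hG hr hr' le_rfl] at hfix
  rw [mem_fixedPoints, IsFixedPt, hroot]
  exact hfix

include hr hr' in
theorem parentMap_eq_or_eq_of_adj {a b : V} (h : G.Adj a b) :
    parentMap G r a = b ∨ parentMap G r b = a := by
  obtain ⟨p, hp⟩ := (hr b).some.toPath
  by_cases ha : a ∈ p.support
  · right
    have hedge : (Walk.cons h.symm Walk.nil : G.Walk b a).IsPath := by simp [h.ne.symm]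
    have htake : p.takeUntil a ha = Walk.cons h.symm Walk.nil :=
      congrArg Subtype.val <|
        (hG.subsingleton_path b a).elim ⟨_, hp.takeUntil ha⟩ ⟨_, hedge⟩
    rw [parentMap_eq_snd hG rfl hp, ← Walk.snd_takeUntil h.ne p ha, htake, Walk.snd_cons]
  · left
    rw [parentMap_eq_snd hG (hr' a b h.reachable) (hp.cons ha (h := h)), Walk.snd_cons]

include hr hr' in
theorem functionalGraph_parentMap : functionalGraph (parentMap G r) = G := by
  ext a b
  rw [functionalGraph_adj]
  constructor
  · rintro ⟨hne, h | h⟩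
    · exact h ▸ adj_parentMap (h ▸ hne.symm)
    · exact (h ▸ adj_parentMap (h ▸ hne)).symm
  · exact fun h => ⟨h.ne, parentMap_eq_or_eq_of_adj hG hr hr' h⟩

end RootedForest

theorem parentMap_functionalGraph [Fintype V] {f : V → V} (hf : periodicPts f ⊆ fixedPoints f) :
    parentMap (functionalGraph f) f^[Fintype.card V] = f := by
  have hG := isAcyclic_functionalGraph hf
  funext v
  obtain ⟨w, hw⟩ : ∃ w, f^[Fintype.card V] v = w := ⟨_, rfl⟩
  have hwfix : f w = w := hw ▸ hf (iterate_card_mem_periodicPts f v)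
  obtain ⟨p, hp⟩ := (hw ▸ reachable_functionalGraph_iterate f v _ :
    (functionalGraph f).Reachable v w).some.toPath
  rw [parentMap_eq_snd hG hw hp]
  cases p with
  | nil => exact hwfix.symm
  | @cons _ u _ hadj q =>
    rw [Walk.snd_cons]
    obtain ⟨-, hfv | hfu⟩ := functionalGraph_adj.mp hadj
    · exact hfv.symm
    · -- the rest of the path joins the child `u` of `v` to the root avoiding the edge `{v, f v}`
      exfalso
      have hvq : v ∉ q.support := ((Walk.cons_isPath_iff _ _).mp hp).2
      have hreach : ((functionalGraph f).deleteEdges {s(v, f v)}).Reachable u w :=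
        reachable_deleteEdges_iff_exists_walk.mpr
          ⟨q, fun he => hvq (q.fst_mem_support_of_mem_edges he)⟩
      obtain ⟨k, hk⟩ := exists_iterate_eq_of_reachable_deleteEdges hreach ⟨1, hfu⟩
      rw [iterate_fixed hwfix] at hk
      exact hvq (hk ▸ q.end_mem_support)

section Weights

variable [Fintype V] [LinearOrder V] {f : V → V}

theorem image_iterate_card_eq_filter (hf : periodicPts f ⊆ fixedPoints f) :
    univ.image f^[Fintype.card V] = univ.filter fun v => f v = v := by
  ext v
  simp only [mem_image, mem_filter, mem_univ, true_and]
  constructor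
  · rintro ⟨u, -, rfl⟩
    exact hf (iterate_card_mem_periodicPts f u)
  · exact fun hv => ⟨v, iterate_fixed hv _⟩

theorem prod_filter_ne_eq_prod_edges {R : Type*} [CommMonoid R]
    (hf : periodicPts f ⊆ fixedPoints f) (w : V → V → R) (hsymm : ∀ u v, w u v = w v u) :
    ∏ v with ¬f v = v, w v (f v) =
      ∏ q ∈ univ.filter (fun q : V × V => q.1 < q.2 ∧ (functionalGraph f).Adj q.1 q.2),
        w q.1 q.2 := by
  have htwo : ∀ {v}, f (f v) = v → f v = v := fun h => isFixedPt_of_iterate_succ_eq (k := 1) hf h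
  refine prod_nbij' (fun v => (min v (f v), max v (f v)))
    (fun q => if f q.1 = q.2 then q.1 else q.2) ?_ ?_ ?_ ?_ ?_
  · intro v hv
    simp only [mem_filter, mem_univ, true_and] at hv ⊢
    rcases lt_or_gt_of_ne hv with h | h
    · simp [min_eq_right h.le, max_eq_left h.le, h, h.ne]
    · simp [min_eq_left h.le, max_eq_right h.le, h, h.ne]
  · rintro ⟨a, b⟩ hq
    simp only [mem_filter, mem_univ, true_and, functionalGraph_adj] at hq ⊢
    obtain ⟨hab, -, hfa | hfb⟩ := hq
    · simp [hfa, hab.ne']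
    · by_cases hfa : f a = b
      · simp [hfa, hab.ne']
      · simp [hfa, hfb, hab.ne]
  · intro v hv
    simp only [mem_filter, mem_univ, true_and] at hv
    rcases lt_or_gt_of_ne hv with h | h
    · simpa [min_eq_right h.le, max_eq_left h.le] using htwo
    · simp [min_eq_left h.le, max_eq_right h.le]
  · rintro ⟨a, b⟩ hq
    simp only [mem_filter, mem_univ, true_and, functionalGraph_adj] at hq
    obtain ⟨hab, -, hfa | hfb⟩ := hq
    · simp [hfa, hab.le]
    · by_cases hfa : f a = b
      · simp [hfa, hab.le]
      · simp [hfa, hfb, hab.le]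
  · intro v hv
    simp only [mem_filter, mem_univ, true_and] at hv
    rcases lt_or_gt_of_ne hv with h | h
    · simp [min_eq_right h.le, max_eq_left h.le, hsymm]
    · simp [min_eq_left h.le, max_eq_right h.le]

theorem prod_ite_eq_pow_mul_prod_edges {R : Type*} [CommMonoid R]
    (hf : periodicPts f ⊆ fixedPoints f) (x : R) (w : V → V → R) (hsymm : ∀ u v, w u v = w v u) :
    ∏ v, (if f v = v then x else w v (f v)) =
      x ^ #(univ.image f^[Fintype.card V]) *
        ∏ q ∈ univ.filter (fun q : V × V => q.1 < q.2 ∧ (functionalGraph f).Adj q.1 q.2),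
          w q.1 q.2 := by
  rw [prod_ite, prod_const, image_iterate_card_eq_filter hf,
    prod_filter_ne_eq_prod_edges hf w hsymm]

end Weights

end SimpleGraph

open SimpleGraph

theorem isRootedSpanningForest_functionalGraph {d : ℕ} {f : Fin d → Fin d}
    (hf : periodicPts f ⊆ fixedPoints f) :
    IsRootedSpanningForest (functionalGraph f) f^[Fintype.card (Fin d)] :=
  ⟨isAcyclic_functionalGraph hf, fun v => reachable_functionalGraph_iterate f v _,
    fun _ _ h => iterate_card_eq_of_reachable hf h⟩

theorem sum_acyclicMaps_eq_sum_rootedSpanningForests {d : ℕ} {R : Type*} [CommSemiring R]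
    (x : R) (w : Fin d → Fin d → R) (hsymm : ∀ u v, w u v = w v u) :
    ∑ f : Fin d → Fin d with periodicPts f ⊆ fixedPoints f,
        ∏ v, (if f v = v then x else w v (f v)) =
      ∑ p ∈ univ.filter (fun p : SimpleGraph (Fin d) × (Fin d → Fin d) =>
          IsRootedSpanningForest p.1 p.2),
        x ^ #(univ.image p.2) *
          ∏ q ∈ univ.filter (fun q : Fin d × Fin d => q.1 < q.2 ∧ p.1.Adj q.1 q.2), w q.1 q.2 := by
  refine sum_nbij' (fun f => (functionalGraph f, f^[Fintype.card (Fin d)]))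
    (fun p => parentMap p.1 p.2) ?_ ?_ ?_ ?_ ?_
  · intro f hf
    simp only [mem_filter, mem_univ, true_and] at hf ⊢
    exact isRootedSpanningForest_functionalGraph hf
  · rintro ⟨G, r⟩ hp
    obtain ⟨hG, hr, hr'⟩ := (mem_filter.mp hp).2
    exact mem_filter.mpr ⟨mem_univ _, periodicPts_parentMap_subset hG hr hr'⟩
  · intro f hf
    exact parentMap_functionalGraph (mem_filter.mp hf).2
  · rintro ⟨G, r⟩ hp
    obtain ⟨hG, hr, hr'⟩ := (mem_filter.mp hp).2
    exact Prod.ext (functionalGraph_parentMap hG hr hr')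
      (funext (iterate_parentMap_of_card_le hG hr hr' le_rfl))
  · intro f hf
    exact prod_ite_eq_pow_mul_prod_edges (mem_filter.mp hf).2 x w hsymm

theorem smul_one_add_weightedLaplacian_eq (d : ℕ) (w : Fin d → Fin d → ℝ) (x : ℝ) :
    x • (1 : Matrix (Fin d) (Fin d) ℝ) + weightedLaplacian d w =
      Matrix.of fun i j =>
        if i = j then ∑ k, (if k = i then x else w i k) else -(if j = i then x else w i j) := by
  ext i j
  by_cases h : i = j
  · subst h
    simp only [Matrix.add_apply, Matrix.smul_apply, Matrix.one_apply_eq, weightedLaplacian,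
      Matrix.of_apply, if_true, smul_eq_mul, mul_one]
    rw [← add_sum_erase _ _ (mem_univ i), if_pos rfl,
      sum_congr rfl fun k hk => if_neg (ne_of_mem_erase hk)]
  · simp [weightedLaplacian, h, Ne.symm h]

theorem det_add_laplacian_eq_forest_sum_general (d : ℕ) (w : Fin d → Fin d → ℝ)
    (hsymm : ∀ r s, w r s = w s r) (x : ℝ) :
    Matrix.det (x • (1 : Matrix (Fin d) (Fin d) ℝ) + weightedLaplacian d w) =
      ∑ p ∈ Finset.univ.filter
          (fun p : SimpleGraph (Fin d) × (Fin d → Fin d) =>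
            IsRootedSpanningForest p.1 p.2),
        x ^ (Finset.univ.image p.2).card *
          ∏ q ∈ Finset.univ.filter
              (fun q : Fin d × Fin d => q.1 < q.2 ∧ p.1.Adj q.1 q.2),
            w q.1 q.2 := by
  rw [smul_one_add_weightedLaplacian_eq, Matrix.det_rowSum_sub_eq_sum_acyclicMaps]
  exact sum_acyclicMaps_eq_sum_rootedSpanningForests x w hsymm

/-- Principal Minors Matrix-Tree Theorem: for the weighted Laplacian `L(w)` of the complete
graph on `d` vertices with symmetric positive weights, and `x > 0`,
`det(xI + L(w)) = Σ_F x^{|roots(F)|} Π_{(r,s) ∈ F} w_{rs}`,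
the sum being over all rooted spanning forests `F`. -/
theorem det_add_laplacian_eq_forest_sum (d : ℕ) (w : Fin d → Fin d → ℝ)
    (hsymm : ∀ r s, w r s = w s r) (hpos : ∀ r s, r ≠ s → 0 < w r s)
    (x : ℝ) (hx : 0 < x) :
    Matrix.det (x • (1 : Matrix (Fin d) (Fin d) ℝ) + weightedLaplacian d w) =
      ∑ p ∈ Finset.univ.filter
          (fun p : SimpleGraph (Fin d) × (Fin d → Fin d) =>
            IsRootedSpanningForest p.1 p.2),
        x ^ (Finset.univ.image p.2).card *
          ∏ q ∈ Finset.univ.filter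
              (fun q : Fin d × Fin d => q.1 < q.2 ∧ p.1.Adj q.1 q.2),
            w q.1 q.2 :=
  det_add_laplacian_eq_forest_sum_general d w hsymm x
end

section
/- Let τ* be drawn uniformly among assignments {1,…,n} → {1,…,d} with type proportions π (all entries of π bounded away from 0 and 1), let m = γ n / log n with γ < H(π)/(d−1), and let S_1,…,S_m be i.i.d. random subsets of {1,…,n} where each element is included independently with probability α ∈ (0,1). Then the probability that τ* is the unique assignment consistent with all m observed histograms (h_a(τ*) = (|τ^{−1}(1)∩S_a|,…,|τ^{−1}(d)∩S_a|) for a = 1,…,m) tends to 0 as n → ∞. More precisely, this probability is at most C(π) n^{(d−1)/2} exp((γ(d−1) − H(π)) n) for a constant C(π) > 0. -/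
/-!
For fixed pools, distinct identified assignments have distinct histogram tuples. For an
assignment of type `c` the histogram of a pool is determined by its entries off one colour
(they sum to the pool size), each at most `c r < n`; so, whatever the pools, at most
`n ^ ((d - 1) m) ≤ exp (γ (d - 1) n)` assignments of type `c` are identified. The type class has
at least `n! / ∏ c_r!` elements, since each fibre of `σ ↦ τ₀ ∘ σ` embeds in the stabiliser
`∏ S_{c_r}` of `τ₀`, and Stirling's bounds make this at least a constant times
`n ^ (-(d - 1) / 2) * exp (H(π) n)`.
-/

open Finset
open scoped Classical

theorem factorial_le_exp_one_mul_stirling {n : ℕ} (hn : n ≠ 0) :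
    (n.factorial : ℝ) ≤ Real.exp 1 * √n * (n / Real.exp 1) ^ n := by
  obtain ⟨k, rfl⟩ := Nat.exists_eq_succ_of_ne_zero hn
  have h := Stirling.stirlingSeq'_antitone (Nat.zero_le k)
  simp only [Function.comp_apply, Nat.succ_eq_add_one, zero_add, Stirling.stirlingSeq_one] at h
  rw [Stirling.stirlingSeq, div_le_iff₀ (by positivity)] at h
  calc _ ≤ Real.exp 1 / √2 * (√(2 * ↑(k + 1)) * (↑(k + 1) / Real.exp 1) ^ (k + 1)) := h
    _ = _ := by
      rw [Real.sqrt_mul zero_le_two]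
      field_simp

theorem sqrt_pow_eq_sqrt_mul_rpow {x : ℝ} (hx : 0 < x) (k : ℕ) :
    √x ^ k = √x * x ^ (((k : ℝ) - 1) / 2) := by
  rw [Real.sqrt_eq_rpow, ← Real.rpow_natCast, ← Real.rpow_mul hx.le, ← Real.rpow_add hx]
  ring_nf

theorem pow_mul_le_exp_of_le_div_log {x y : ℝ} (hx : 1 < x) {m : ℕ}
    (hm : (m : ℝ) ≤ y / Real.log x) (k : ℕ) : x ^ (k * m) ≤ Real.exp (k * y) := by
  have hlog : m * Real.log x ≤ y := (le_div_iff₀ (Real.log_pos hx)).mp hm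
  rw [← Real.exp_log (pow_pos (zero_lt_one.trans hx) _), Real.log_pow, Nat.cast_mul, mul_assoc]
  gcongr

theorem inv_mul_le_mul_exp_sub {S T C a b : ℝ} (hT0 : 0 ≤ T) (hS : S ≤ Real.exp a)
    (hT : Real.exp b ≤ C * T) : T⁻¹ * S ≤ C * Real.exp (a - b) := by
  have hCT : 0 < C * T := (Real.exp_pos b).trans_le hT
  have hTpos : 0 < T := lt_of_le_of_ne hT0 fun h => by simp [← h] at hCT
  rw [inv_mul_le_iff₀ hTpos, Real.exp_sub]
  calc S ≤ Real.exp a / Real.exp b * Real.exp b := by rwa [div_mul_cancel₀ _ (Real.exp_pos b).ne']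
    _ ≤ Real.exp a / Real.exp b * (C * T) := by gcongr
    _ = T * (C * (Real.exp a / Real.exp b)) := by ring

theorem sum_prod_pow_mul_one_sub_pow_eq_one {A ι : Type*} [Fintype A] [DecidableEq A] [Fintype ι]
    (α : ℝ) :
    ∑ Ss : A → Finset ι, ∏ a, α ^ #(Ss a) * (1 - α) ^ (Fintype.card ι - #(Ss a)) = 1 := by
  rw [← Fintype.prod_sum fun (_ : A) (S : Finset ι) => α ^ #S * (1 - α) ^ (Fintype.card ι - #S)]
  simp [Fintype.sum_pow_mul_eq_add_pow]

theorem sum_sum_mul_ite_le_of_card_filter_le {α Ω : Type*} [Fintype Ω] (T : Finset α)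
    {w : Ω → ℝ} (hw : ∀ ω, 0 ≤ w ω) (hw1 : ∑ ω, w ω = 1) (P : Ω → α → Prop)
    [∀ ω, DecidablePred (P ω)] {K : ℝ} (hK : ∀ ω, (#{x ∈ T | P ω x} : ℝ) ≤ K) :
    ∑ x ∈ T, ∑ ω, w ω * (if P ω x then 1 else 0) ≤ K := by
  rw [sum_comm]
  calc ∑ ω, ∑ x ∈ T, w ω * (if P ω x then 1 else 0) = ∑ ω, w ω * #{x ∈ T | P ω x} := by
        simp only [← mul_sum, sum_boole]
    _ ≤ ∑ ω, w ω * K := sum_le_sum fun ω _ => mul_le_mul_of_nonneg_left (hK ω) (hw ω)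
    _ = K := by rw [← sum_mul, hw1, one_mul]

theorem card_perm_comp_eq_le_card_stabilizer {ι κ : Type*} [Fintype ι] [DecidableEq ι]
    [DecidableEq κ] (f g : ι → κ) :
    #{σ : Equiv.Perm ι | f ∘ σ = g} ≤ Fintype.card {σ : Equiv.Perm ι // f ∘ σ = f} := by
  rcases isEmpty_or_nonempty {σ : Equiv.Perm ι // f ∘ σ = g} with h | ⟨σ₀, hσ₀⟩
  · simp [filter_eq_empty_iff.mpr fun σ _ hσ => h.false ⟨σ, hσ⟩]
  rw [← Fintype.card_subtype]
  refine Fintype.card_le_of_injective (fun σ => ⟨σ.1 * σ₀⁻¹, ?_⟩) fun σ σ' h => ?_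
  · ext i
    simpa using (congrFun σ.2 (σ₀⁻¹ i)).trans (congrFun hσ₀ (σ₀⁻¹ i)).symm
  · exact Subtype.ext (mul_right_cancel (congrArg Subtype.val h))

section Entropy

variable {κ : Type*} [Fintype κ]

noncomputable def entropy (π : κ → ℝ) : ℝ := -∑ r, π r * Real.log (π r)

variable {π : κ → ℝ} {c : κ → ℕ} {n : ℕ}

theorem prod_pow_eq_exp_neg_entropy_mul (hπ : ∀ r, 0 < π r) (hc : ∀ r, (c r : ℝ) = π r * n) :
    ∏ r, π r ^ c r = Real.exp (-(entropy π * n)) := by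
  have hlog : ∀ r, π r ^ c r = Real.exp (π r * Real.log (π r) * n) := fun r => by
    rw [← Real.rpow_natCast, Real.rpow_def_of_pos (hπ r), hc r]
    ring_nf
  simp only [hlog, ← Real.exp_sum, entropy, ← sum_mul, neg_neg, neg_mul]

theorem prod_factorial_le (hπ : ∀ r, 0 < π r) (hc : ∀ r, (c r : ℝ) = π r * n)
    (hcsum : ∑ r, c r = n) (hn : n ≠ 0) :
    ∏ r, ((c r).factorial : ℝ) ≤
      Real.exp 1 ^ Fintype.card κ * (∏ r, √(π r)) * √n ^ Fintype.card κ *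
        ((n / Real.exp 1) ^ n * Real.exp (-(entropy π * n))) := by
  have hc0 : ∀ r, c r ≠ 0 := fun r h0 => by
    have := hc r
    simp [h0, (hπ r).ne', hn] at this
  have hsqrt : ∀ r, √(c r : ℝ) = √(π r) * √n := fun r => by
    rw [hc r, Real.sqrt_mul (hπ r).le]
  have hpow : ∀ r, ((c r : ℝ) / Real.exp 1) ^ c r = π r ^ c r * ((n : ℝ) / Real.exp 1) ^ c r :=
    fun r => by rw [← mul_pow, hc r, mul_div_assoc]
  calc ∏ r, ((c r).factorial : ℝ) ≤ ∏ r, (Real.exp 1 * √(c r) * (c r / Real.exp 1) ^ c r) :=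
        prod_le_prod (fun r _ => by positivity) fun r _ => factorial_le_exp_one_mul_stirling (hc0 r)
    _ = _ := by
      simp only [prod_mul_distrib, hsqrt, hpow, prod_const, card_univ, prod_pow_eq_pow_sum, hcsum,
        prod_pow_eq_exp_neg_entropy_mul hπ hc]
      ring

end Entropy

section Assignments

variable {ι κ : Type*} [Fintype κ] [DecidableEq κ]

def histogram (S : Finset ι) (τ : ι → κ) (r : κ) : ℕ :=
  #{i ∈ S | τ i = r}

theorem sum_histogram (S : Finset ι) (τ : ι → κ) : ∑ r, histogram S τ r = #S :=
  (card_eq_sum_card_fiberwise fun i _ => mem_univ (τ i)).symm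

theorem histogram_eq_of_forall_ne {S : Finset ι} {τ τ' : ι → κ} (r₀ : κ)
    (h : ∀ r, r ≠ r₀ → histogram S τ r = histogram S τ' r) :
    histogram S τ = histogram S τ' := by
  have hrest : ∑ r ∈ univ.erase r₀, histogram S τ r = ∑ r ∈ univ.erase r₀, histogram S τ' r :=
    sum_congr rfl fun r hr => h r (ne_of_mem_erase hr)
  have hτ := sum_histogram S τ
  have hτ' := sum_histogram S τ'
  rw [← add_sum_erase _ _ (mem_univ r₀)] at hτ hτ'
  funext r
  by_cases hr : r = r₀
  · subst hr; omega
  · exact h r hr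

variable [Fintype ι] [DecidableEq ι]

def assignmentsOfType (c : κ → ℕ) : Finset (ι → κ) :=
  {τ | ∀ r, #{i | τ i = r} = c r}

/-- For `κ = Fin d` the filter is elaborated with another (equal) decidability instance. -/
theorem filter_eq_assignmentsOfType (c : κ → ℕ)
    [DecidablePred fun τ : ι → κ => ∀ r, #{i | τ i = r} = c r] :
    ({τ | ∀ r, #{i | τ i = r} = c r} : Finset (ι → κ)) = assignmentsOfType c := by
  unfold assignmentsOfType
  congr

theorem histogram_le_of_mem_assignmentsOfType {c : κ → ℕ} {τ : ι → κ}
    (hτ : τ ∈ assignmentsOfType c) (S : Finset ι) (r : κ) : histogram S τ r ≤ c r := by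
  rw [assignmentsOfType, mem_filter] at hτ
  exact (hτ.2 r).le.trans' (card_le_card (filter_subset_filter _ (subset_univ S)))

theorem card_filter_determined_by_histograms_le {A : Type*} [Fintype A] (Ss : A → Finset ι)
    {c : κ → ℕ} (r₀ : κ) {N : ℕ} (hc : ∀ r, r ≠ r₀ → c r < N) :
    #{τ ∈ assignmentsOfType c |
        ∀ τ', (∀ a r, histogram (Ss a) τ' r = histogram (Ss a) τ r) → τ' = τ}
      ≤ N ^ ((Fintype.card κ - 1) * Fintype.card A) := by
  let code : (ι → κ) → A → {r // r ≠ r₀} → ℕ := fun τ a r => histogram (Ss a) τ r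
  calc _ ≤ #(Fintype.piFinset fun _ : A => Fintype.piFinset fun _ : {r // r ≠ r₀} => range N) := by
        refine card_le_card_of_injOn code (fun τ hτ => ?_) fun τ _ τ' hτ' hcode => ?_
        · simp only [coe_filter, Set.mem_ofPred_eq] at hτ
          simp only [Fintype.coe_piFinset, Set.mem_pi, Set.mem_univ, mem_coe, mem_range,
            forall_const]
          exact fun a r => (histogram_le_of_mem_assignmentsOfType hτ.1 _ _).trans_lt (hc r r.2)
        · simp only [coe_filter, Set.mem_ofPred_eq] at hτ'
          refine hτ'.2 τ fun a => congrFun (histogram_eq_of_forall_ne r₀ fun r hr => ?_)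
          exact congrFun (congrFun hcode a) ⟨r, hr⟩
    _ = _ := by simp [Fintype.card_subtype_compl, ← pow_mul, mul_comm]

theorem exists_mem_assignmentsOfType {c : κ → ℕ} (hc : ∑ r, c r = Fintype.card ι) :
    ∃ τ : ι → κ, τ ∈ assignmentsOfType c := by
  obtain ⟨e⟩ : Nonempty ((Σ r, Fin (c r)) ≃ ι) := Fintype.card_eq.mp (by simp [hc])
  refine ⟨fun i => (e.symm i).1, mem_filter.mpr ⟨mem_univ _, fun r => ?_⟩⟩
  rw [← Fintype.card_subtype, ← Fintype.card_fin (c r)]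
  exact Fintype.card_congr ((e.symm.subtypeEquiv fun _ => Iff.rfl).trans (Equiv.sigmaSubtype r))

theorem comp_perm_mem_assignmentsOfType {c : κ → ℕ} {τ : ι → κ} (hτ : τ ∈ assignmentsOfType c)
    (σ : Equiv.Perm ι) : τ ∘ σ ∈ assignmentsOfType c := by
  simp only [assignmentsOfType, mem_filter, mem_univ, true_and] at hτ ⊢
  intro r
  rw [← hτ r]
  exact card_equiv σ fun i => by simp

theorem factorial_card_le_card_assignmentsOfType_mul {c : κ → ℕ}
    (hc : ∑ r, c r = Fintype.card ι) :
    (Fintype.card ι).factorial ≤ #(assignmentsOfType (ι := ι) c) * ∏ r, (c r).factorial := by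
  obtain ⟨τ₀, hτ₀⟩ := exists_mem_assignmentsOfType hc
  have hstab : Fintype.card {σ : Equiv.Perm ι // τ₀ ∘ σ = τ₀} = ∏ r, (c r).factorial := by
    rw [DomMulAct.stabilizer_card]
    simp only [assignmentsOfType, mem_filter, mem_univ, true_and] at hτ₀
    simp [Fintype.card_subtype, hτ₀]
  rw [← Fintype.card_perm, ← card_univ, mul_comm, ← hstab]
  exact card_le_mul_card_image_of_maps_to (fun σ _ => comp_perm_mem_assignmentsOfType hτ₀ σ) _
    fun τ _ => card_perm_comp_eq_le_card_stabilizer τ₀ τ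

theorem exp_entropy_mul_le_card_assignmentsOfType {π : κ → ℝ} (hπ : ∀ r, 0 < π r) {c : κ → ℕ}
    (hc : ∀ r, (c r : ℝ) = π r * Fintype.card ι) (hcsum : ∑ r, c r = Fintype.card ι)
    (hι : Fintype.card ι ≠ 0) :
    Real.exp (entropy π * Fintype.card ι) ≤
      Real.exp 1 ^ Fintype.card κ * (∏ r, √(π r)) / √(2 * Real.pi) *
        (Fintype.card ι : ℝ) ^ (((Fintype.card κ : ℝ) - 1) / 2) *
          #(assignmentsOfType (ι := ι) c) := by
  set n := Fintype.card ι
  have hn : (0 : ℝ) < n := by positivity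
  have hcount : (n.factorial : ℝ) ≤
      #(assignmentsOfType (ι := ι) c) * ∏ r, ((c r).factorial : ℝ) := by
    exact_mod_cast factorial_card_le_card_assignmentsOfType_mul hcsum
  have key : √(2 * Real.pi) * √n * (n / Real.exp 1) ^ n ≤
      #(assignmentsOfType (ι := ι) c) * (Real.exp 1 ^ Fintype.card κ * (∏ r, √(π r)) *
        √n ^ Fintype.card κ * ((n / Real.exp 1) ^ n * Real.exp (-(entropy π * n)))) := by
    calc _ = √(2 * Real.pi * n) * (n / Real.exp 1) ^ n := by
          rw [Real.sqrt_mul (by positivity : (0 : ℝ) ≤ 2 * Real.pi) n]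
      _ ≤ n.factorial := Stirling.le_factorial_stirling n
      _ ≤ _ := hcount.trans (by gcongr; exact prod_factorial_le hπ hc hcsum hι)
  rw [sqrt_pow_eq_sqrt_mul_rpow hn, Real.exp_neg] at key
  have hq : 0 < √(2 * Real.pi) * √n * (n / Real.exp 1) ^ n * (Real.exp (entropy π * n))⁻¹ := by
    positivity
  refine le_of_mul_le_mul_right (le_of_eq_of_le ?_ (key.trans_eq ?_)) hq <;> field_simp

end Assignments

theorem uniqueness_probability_upper_bound_general (d : ℕ) (hd : 2 ≤ d)
    (π : Fin d → ℝ) (hπ : ∀ r, π r ∈ Set.Ioo (0:ℝ) 1) (hsum : ∑ r, π r = 1)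
    (α : ℝ) (hα : α ∈ Set.Ioo (0:ℝ) 1)
    (γ : ℝ) :
    ∃ C > (0:ℝ), ∀ n : ℕ, 2 ≤ n → ∀ c : Fin d → ℕ, (∀ r, (c r : ℝ) = π r * n) →
      ∀ m : ℕ, (m : ℝ) ≤ γ * n / Real.log n →
      ((((Finset.univ.filter (fun τ : Fin n → Fin d =>
            ∀ r, (Finset.univ.filter (fun i => τ i = r)).card = c r)).card : ℝ))⁻¹ *
        ∑ τstar ∈ Finset.univ.filter (fun τ : Fin n → Fin d =>
            ∀ r, (Finset.univ.filter (fun i => τ i = r)).card = c r),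
          ∑ Ss : Fin m → Finset (Fin n),
            (∏ a, α ^ (Ss a).card * (1 - α) ^ (n - (Ss a).card)) *
              (if ∀ τ : Fin n → Fin d,
                  (∀ (a : Fin m) (r : Fin d),
                    ((Ss a).filter (fun i => τ i = r)).card =
                      ((Ss a).filter (fun i => τstar i = r)).card) → τ = τstar
                then (1 : ℝ) else 0))
      ≤ C * (n : ℝ) ^ (((d : ℝ) - 1) / 2) *
          Real.exp ((γ * ((d : ℝ) - 1) - (-(∑ r, π r * Real.log (π r)))) * n) := by
  have hπpos : ∀ r, 0 < π r := fun r => (hπ r).1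
  have hprod : 0 < ∏ r, √(π r) := prod_pos fun r _ => Real.sqrt_pos.2 (hπpos r)
  refine ⟨Real.exp 1 ^ d * (∏ r, √(π r)) / √(2 * Real.pi), by positivity, ?_⟩
  intro n hn c hc m hm
  have hn0 : (0 : ℝ) < n := by positivity
  have hcsum : ∑ r, c r = n := by
    exact_mod_cast (by push_cast [hc, ← sum_mul, hsum]; ring : ((∑ r, c r : ℕ) : ℝ) = n)
  have hclt : ∀ r, c r < n := fun r => by
    exact_mod_cast (hc r).trans_lt (mul_lt_of_lt_one_left hn0 (hπ r).2)
  have hT := exp_entropy_mul_le_card_assignmentsOfType (ι := Fin n) hπpos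
    (by simpa using hc) (by simpa using hcsum) (by simp; omega)
  simp only [Fintype.card_fin] at hT
  have hpow : (n : ℝ) ^ ((d - 1) * m) ≤ Real.exp (γ * ((d : ℝ) - 1) * n) :=
    (pow_mul_le_exp_of_le_div_log (by exact_mod_cast hn) hm (d - 1)).trans_eq
      (by push_cast [Nat.cast_sub (by omega : 1 ≤ d)]; ring_nf)
  have hw : ∀ Ss : Fin m → Finset (Fin n), 0 ≤ ∏ a, α ^ #(Ss a) * (1 - α) ^ (n - #(Ss a)) :=
    fun Ss => prod_nonneg fun a _ =>
      mul_nonneg (pow_nonneg hα.1.le _) (pow_nonneg (sub_nonneg.2 hα.2.le) _)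
  have hw1 := sum_prod_pow_mul_one_sub_pow_eq_one (A := Fin m) (ι := Fin n) α
  rw [Fintype.card_fin] at hw1
  rw [filter_eq_assignmentsOfType, sub_mul]
  refine inv_mul_le_mul_exp_sub (Nat.cast_nonneg _) ?_ hT
  refine (sum_sum_mul_ite_le_of_card_filter_le _ hw hw1 _ fun Ss => ?_).trans hpow
  have h := card_filter_determined_by_histograms_le Ss (⟨0, by omega⟩ : Fin d) fun r _ => hclt r
  simp only [Fintype.card_fin] at h
  rw [← Nat.cast_pow, Nat.cast_le]
  convert h using 3
  exact Iff.rfl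

/-- Lower bound (converse) part of the main theorem.  Let `τ*` be uniform among assignments
`{1,…,n} → {1,…,d}` with type counts `c` (proportions `π`, entries in `(0,1)`), let
`m ≤ γ n / log n` with `γ < H(π)/(d−1)`, and let `S_1,…,S_m` be i.i.d. random subsets where
each element is included independently with probability `α`.  The probability that `τ*` is
the unique assignment consistent with all `m` observed histograms is at most
`C(π) n^{(d−1)/2} exp((γ(d−1) − H(π)) n)` (hence tends to `0` as `n → ∞`). -/
theorem uniqueness_probability_upper_bound (d : ℕ) (hd : 2 ≤ d)
    (π : Fin d → ℝ) (hπ : ∀ r, π r ∈ Set.Ioo (0:ℝ) 1) (hsum : ∑ r, π r = 1)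
    (α : ℝ) (hα : α ∈ Set.Ioo (0:ℝ) 1)
    (γ : ℝ) (hγpos : 0 < γ)
    (hγ : γ < (-(∑ r, π r * Real.log (π r))) / ((d : ℝ) - 1)) :
    ∃ C > (0:ℝ), ∀ n : ℕ, 2 ≤ n → ∀ c : Fin d → ℕ, (∀ r, (c r : ℝ) = π r * n) →
      ∀ m : ℕ, (m : ℝ) ≤ γ * n / Real.log n →
      ((((Finset.univ.filter (fun τ : Fin n → Fin d =>
            ∀ r, (Finset.univ.filter (fun i => τ i = r)).card = c r)).card : ℝ))⁻¹ *
        ∑ τstar ∈ Finset.univ.filter (fun τ : Fin n → Fin d =>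
            ∀ r, (Finset.univ.filter (fun i => τ i = r)).card = c r),
          ∑ Ss : Fin m → Finset (Fin n),
            (∏ a, α ^ (Ss a).card * (1 - α) ^ (n - (Ss a).card)) *
              (if ∀ τ : Fin n → Fin d,
                  (∀ (a : Fin m) (r : Fin d),
                    ((Ss a).filter (fun i => τ i = r)).card =
                      ((Ss a).filter (fun i => τstar i = r)).card) → τ = τstar
                then (1 : ℝ) else 0))
      ≤ C * (n : ℝ) ^ (((d : ℝ) - 1) / 2) *
          Real.exp ((γ * ((d : ℝ) - 1) - (-(∑ r, π r * Real.log (π r)))) * n) :=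
  uniqueness_probability_upper_bound_general d hd π hπ hsum α hα γ
end
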